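/- arXiv:2101.08142 — 10 statements merged into one kernel-verified Lean document; each statement's English description precedes it below -/
import Mathlib

section
/- Let G be a nonnegative, integrable, (h,m)-convex function on an interval J containing [ν, μ] and the points ν/m, μ/m, μ/m², with ν < μ, m ∈ (0,1], and h nonnegative and integrable on [0,1] with h not identically zero. Then G((ν+μ)/2) ≤ h(1/2) · (1/(μ-ν)) ∫_ν^μ [G(x) + m·G(x/m)] dx. -/
/-!
Every point of `[ν, μ]` pairs with its mirror image `ν + μ - x`, and the midpoint is
`½ x + m ½ ((ν + μ - x) / m)`. So (h,m)-convexity with `γ = ½` bounds `G ((ν + μ) / 2)` by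
`h(½) (G x + m G ((ν + μ - x) / m))`; integrating over `[ν, μ]` and reflecting the second term
back gives the inequality.
-/

open Set intervalIntegral

def HMConvexOn (J : Set ℝ) (m : ℝ) (h G : ℝ → ℝ) : Prop :=
  ∀ x ∈ J, ∀ y ∈ J, ∀ γ ∈ Icc (0 : ℝ) 1,
    G (γ * x + m * (1 - γ) * y) ≤ h γ * G x + m * h (1 - γ) * G y

theorem HMConvexOn.apply_midpoint_le {J : Set ℝ} {m : ℝ} {h G : ℝ → ℝ}
    (hG : HMConvexOn J m h G) (hm : m ≠ 0) {x y : ℝ} (hx : x ∈ J) (hy : y / m ∈ J) :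
    G ((x + y) / 2) ≤ h (1 / 2) * (G x + m * G (y / m)) := by
  have hmid : (1 / 2 : ℝ) * x + m * (1 - 1 / 2) * (y / m) = (x + y) / 2 := by
    field_simp
    ring
  have := hG x hx (y / m) hy (1 / 2) ⟨by norm_num, by norm_num⟩
  rw [hmid, show (1 : ℝ) - 1 / 2 = 1 / 2 by norm_num] at this
  linarith

theorem Set.OrdConnected.div_mem {J : Set ℝ} (hJ : J.OrdConnected) {m a b x : ℝ} (hm : 0 < m)
    (ha : a / m ∈ J) (hb : b / m ∈ J) (hx : x ∈ Icc a b) : x / m ∈ J :=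
  hJ.out ha hb ⟨div_le_div_of_nonneg_right hx.1 hm.le, div_le_div_of_nonneg_right hx.2 hm.le⟩

theorem IntervalIntegrable.comp_add_sub {f : ℝ → ℝ} {a b : ℝ}
    (hf : IntervalIntegrable f MeasureTheory.volume a b) :
    IntervalIntegrable (fun x => f (a + b - x)) MeasureTheory.volume a b := by
  simpa using (hf.comp_sub_left (a + b)).symm

theorem intervalIntegral.integral_comp_add_sub (f : ℝ → ℝ) (a b : ℝ) :
    ∫ x in a..b, f (a + b - x) = ∫ x in a..b, f x := by
  simp [integral_comp_sub_left]

theorem hm_convex_HH_left_general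
    (ν μ m : ℝ) (hνμ : ν < μ) (hm : m ∈ Set.Ioc (0:ℝ) 1)
    (J : Set ℝ) (hJint : Set.OrdConnected J)
    (hJ : Set.Icc ν μ ⊆ J) (hνm : ν / m ∈ J) (hμm : μ / m ∈ J)
    (h : ℝ → ℝ)
    (G : ℝ → ℝ)
    (hGint : IntervalIntegrable G MeasureTheory.volume ν μ)
    (hGmint : IntervalIntegrable (fun x => G (x / m)) MeasureTheory.volume ν μ)
    (hG : ∀ x ∈ J, ∀ y ∈ J, ∀ γ ∈ Set.Icc (0:ℝ) 1,
      G (γ * x + m * (1 - γ) * y) ≤ h γ * G x + m * h (1 - γ) * G y) :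
    G ((ν + μ) / 2) ≤ h (1/2) * ((1 / (μ - ν)) * ∫ x in ν..μ, (G x + m * G (x / m))) := by
  have hpoint : ∀ x ∈ Icc ν μ,
      G ((ν + μ) / 2) ≤ h (1 / 2) * (G x + m * G ((ν + μ - x) / m)) := fun x hx => by
    have hmirror : ν + μ - x ∈ Icc ν μ := ⟨by linarith [hx.2], by linarith [hx.1]⟩
    have := (show HMConvexOn J m h G from hG).apply_midpoint_le hm.1.ne' (hJ hx)
      (hJint.div_mem hm.1 hνm hμm hmirror)
    rwa [add_sub_cancel] at this
  have hmirrorint := hGmint.comp_add_sub.const_mul m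
  have hint : (μ - ν) * G ((ν + μ) / 2) ≤ h (1 / 2) * ∫ x in ν..μ, (G x + m * G (x / m)) := by
    calc (μ - ν) * G ((ν + μ) / 2)
        ≤ ∫ x in ν..μ, h (1 / 2) * (G x + m * G ((ν + μ - x) / m)) := by
          simpa using integral_mono_on hνμ.le intervalIntegrable_const
            ((hGint.add hmirrorint).const_mul _) hpoint
      _ = h (1 / 2) * ∫ x in ν..μ, (G x + m * G (x / m)) := by
          rw [integral_const_mul, integral_add hGint hmirrorint, integral_const_mul,
            integral_comp_add_sub (fun x => G (x / m)), integral_add hGint (hGmint.const_mul m),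
            integral_const_mul]
  rw [one_div_mul_eq_div, mul_div_assoc', le_div_iff₀ (sub_pos.mpr hνμ)]
  linarith

theorem hm_convex_HH_left
    (ν μ m : ℝ) (hνμ : ν < μ) (hm : m ∈ Set.Ioc (0:ℝ) 1)
    (J : Set ℝ) (hJint : Set.OrdConnected J)
    (hJ : Set.Icc ν μ ⊆ J) (hνm : ν / m ∈ J) (hμm : μ / m ∈ J) (hμm2 : μ / m ^ 2 ∈ J)
    (h : ℝ → ℝ) (hh : ∀ γ ∈ Set.Icc (0:ℝ) 1, 0 ≤ h γ)
    (hhne : ∃ γ ∈ Set.Icc (0:ℝ) 1, h γ ≠ 0)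
    (hhint : IntervalIntegrable h MeasureTheory.volume 0 1)
    (G : ℝ → ℝ)
    (hGnonneg : ∀ x ∈ J, 0 ≤ G x)
    (hGint : IntervalIntegrable G MeasureTheory.volume ν μ)
    (hGmint : IntervalIntegrable (fun x => G (x / m)) MeasureTheory.volume ν μ)
    (hG : ∀ x ∈ J, ∀ y ∈ J, ∀ γ ∈ Set.Icc (0:ℝ) 1,
      G (γ * x + m * (1 - γ) * y) ≤ h γ * G x + m * h (1 - γ) * G y) :
    G ((ν + μ) / 2) ≤ h (1/2) * ((1 / (μ - ν)) * ∫ x in ν..μ, (G x + m * G (x / m))) :=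
  hm_convex_HH_left_general ν μ m hνμ hm J hJint hJ hνm hμm h G hGint hGmint hG
end

section
/- Let G : [0,∞) → ℝ be (h,m)-convex with m ∈ (0,1], where h is nonnegative and integrable on [0,1], and suppose 0 ≤ ν < μ and G is integrable on [mν, mμ] ∪ [ν, μ]. Then (1/(m+1)) · [(1/(mμ - ν)) ∫_ν^{mμ} G(x) dx + (1/(μ - mν)) ∫_{mν}^μ G(x) dx] ≤ (G(ν) + G(μ)) · [∫_0^1 h(γ) dγ + ∫_0^1 h(1-γ) dγ]. -/
/-!
Both averages are integrals over `γ ∈ [0, 1]` of `G` at the points `γν + m(1-γ)μ` and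
`γμ + m(1-γ)ν`. Integrating the `(h, m)`-convexity inequality at these points bounds their sum by
`(∫ h(γ) + m ∫ h(1-γ)) (G ν + G μ)`, and `1/(m+1) ≤ 1`, `m ≤ 1` finish the estimate.
-/

open MeasureTheory Set intervalIntegral

def IsHMConvex (h : ℝ → ℝ) (m : ℝ) (G : ℝ → ℝ) : Prop :=
  (∀ x : ℝ, 0 ≤ x → 0 ≤ G x) ∧ ∀ x : ℝ, 0 ≤ x → ∀ y : ℝ, 0 ≤ y → ∀ γ ∈ Icc (0:ℝ) 1,
    G (γ * x + m * (1 - γ) * y) ≤ h γ * G x + m * h (1 - γ) * G y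

/-- Unlike `intervalIntegral.integral_mono_on`, the smaller function need not be integrable. -/
theorem intervalIntegral.integral_mono_on_of_nonneg {μ : Measure ℝ} {f g : ℝ → ℝ} {a b : ℝ}
    (hab : a ≤ b) (hf : ∀ x ∈ Icc a b, 0 ≤ f x) (hfg : ∀ x ∈ Icc a b, f x ≤ g x)
    (hg : IntervalIntegrable g μ a b) :
    ∫ x in a..b, f x ∂μ ≤ ∫ x in a..b, g x ∂μ := by
  simp only [integral_of_le hab]
  exact setIntegral_mono_of_nonneg (fun x hx => hf x (Ioc_subset_Icc_self hx))
    (fun x hx => hfg x (Ioc_subset_Icc_self hx)) hg.1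

theorem one_div_sub_mul_integral_comm (G : ℝ → ℝ) (a b : ℝ) :
    1 / (b - a) * ∫ x in a..b, G x = 1 / (a - b) * ∫ x in b..a, G x := by
  rw [integral_symm, ← neg_sub, div_neg, neg_mul_neg]

theorem one_div_sub_mul_integral_le_integral_comp {G : ℝ → ℝ} {a b : ℝ} (ha : 0 ≤ G a) :
    1 / (b - a) * ∫ x in a..b, G x ≤ ∫ γ in (0:ℝ)..1, G (γ * b + (1 - γ) * a) := by
  rcases eq_or_ne b a with rfl | hab
  · simp [← add_mul, ha]
  have haffine : (fun γ => G (γ * b + (1 - γ) * a)) = fun γ => G ((b - a) * γ + a) := by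
    funext γ; ring_nf
  rw [haffine, integral_comp_mul_add G (sub_ne_zero.mpr hab)]
  simp

theorem IsHMConvex.integral_comp_le {h G : ℝ → ℝ} {m x y : ℝ} (hG : IsHMConvex h m G)
    (hm : 0 ≤ m) (hh : IntervalIntegrable h volume 0 1) (hx : 0 ≤ x) (hy : 0 ≤ y) :
    ∫ γ in (0:ℝ)..1, G (γ * x + (1 - γ) * (m * y))
      ≤ (∫ γ in (0:ℝ)..1, h γ) * G x + m * (∫ γ in (0:ℝ)..1, h (1 - γ)) * G y := by
  have hh' : IntervalIntegrable (fun γ => h (1 - γ)) volume 0 1 := by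
    simpa using (hh.comp_sub_left 1).symm
  have hbound : ∫ γ in (0:ℝ)..1, (h γ * G x + m * h (1 - γ) * G y)
      = (∫ γ in (0:ℝ)..1, h γ) * G x + m * (∫ γ in (0:ℝ)..1, h (1 - γ)) * G y := by
    rw [integral_add (hh.mul_const _) ((hh'.const_mul m).mul_const _),
      intervalIntegral.integral_mul_const, intervalIntegral.integral_mul_const,
      intervalIntegral.integral_const_mul]
  rw [← hbound]
  refine integral_mono_on_of_nonneg zero_le_one (fun γ hγ => hG.1 _ ?_) (fun γ hγ => ?_)
    ((hh.mul_const _).add ((hh'.const_mul m).mul_const _))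
  · exact add_nonneg (mul_nonneg hγ.1 hx) (mul_nonneg (sub_nonneg.2 hγ.2) (mul_nonneg hm hy))
  · convert hG.2 x hx y hy γ hγ using 2
    ring

theorem hm_convex_HH_second_general
    (ν μ m : ℝ) (hν : 0 ≤ ν) (hνμ : ν < μ) (hm : m ∈ Set.Ioc (0:ℝ) 1)
    (h : ℝ → ℝ) (hh : ∀ γ ∈ Set.Icc (0:ℝ) 1, 0 ≤ h γ)
    (hhint : IntervalIntegrable h MeasureTheory.volume 0 1)
    (G : ℝ → ℝ)
    (hGnonneg : ∀ x : ℝ, 0 ≤ x → 0 ≤ G x)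
    (hG : ∀ x : ℝ, 0 ≤ x → ∀ y : ℝ, 0 ≤ y → ∀ γ ∈ Set.Icc (0:ℝ) 1,
      G (γ * x + m * (1 - γ) * y) ≤ h γ * G x + m * h (1 - γ) * G y) :
    (1 / (m + 1)) * ((1 / (m * μ - ν)) * (∫ x in ν..(m * μ), G x)
        + (1 / (μ - m * ν)) * ∫ x in (m * ν)..μ, G x)
      ≤ (G ν + G μ) * ((∫ γ in (0:ℝ)..1, h γ) + ∫ γ in (0:ℝ)..1, h (1 - γ)) := by
  obtain ⟨hm0, hm1⟩ := hm
  have hμ : 0 ≤ μ := hν.trans hνμ.le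
  have hGconv : IsHMConvex h m G := ⟨hGnonneg, hG⟩
  have hA := (one_div_sub_mul_integral_le_integral_comp (hGnonneg _ (mul_nonneg hm0.le hμ))).trans
    (hGconv.integral_comp_le hm0.le hhint hν hμ)
  have hB := (one_div_sub_mul_integral_le_integral_comp (hGnonneg _ (mul_nonneg hm0.le hν))).trans
    (hGconv.integral_comp_le hm0.le hhint hμ hν)
  rw [← one_div_sub_mul_integral_comm] at hA
  have hH₁ : 0 ≤ ∫ γ in (0:ℝ)..1, h γ := integral_nonneg zero_le_one hh
  have hH₂ : 0 ≤ ∫ γ in (0:ℝ)..1, h (1 - γ) :=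
    integral_nonneg zero_le_one fun γ hγ => hh _ ⟨by linarith [hγ.2], by linarith [hγ.1]⟩
  have hGν := hGnonneg ν hν
  have hGμ := hGnonneg μ hμ
  rw [one_div, inv_mul_le_iff₀ (by positivity)]
  nlinarith [mul_nonneg (mul_nonneg hm0.le hH₁) (add_nonneg hGν hGμ),
    mul_nonneg hH₂ (add_nonneg hGν hGμ)]

theorem hm_convex_HH_second
    (ν μ m : ℝ) (hν : 0 ≤ ν) (hνμ : ν < μ) (hm : m ∈ Set.Ioc (0:ℝ) 1)
    (h : ℝ → ℝ) (hh : ∀ γ ∈ Set.Icc (0:ℝ) 1, 0 ≤ h γ)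
    (hhint : IntervalIntegrable h MeasureTheory.volume 0 1)
    (G : ℝ → ℝ)
    (hGnonneg : ∀ x : ℝ, 0 ≤ x → 0 ≤ G x)
    (hGint1 : IntervalIntegrable G MeasureTheory.volume ν (m * μ))
    (hGint2 : IntervalIntegrable G MeasureTheory.volume (m * ν) μ)
    (hG : ∀ x : ℝ, 0 ≤ x → ∀ y : ℝ, 0 ≤ y → ∀ γ ∈ Set.Icc (0:ℝ) 1,
      G (γ * x + m * (1 - γ) * y) ≤ h γ * G x + m * h (1 - γ) * G y) :
    (1 / (m + 1)) * ((1 / (m * μ - ν)) * (∫ x in ν..(m * μ), G x)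
        + (1 / (μ - m * ν)) * ∫ x in (m * ν)..μ, G x)
      ≤ (G ν + G μ) * ((∫ γ in (0:ℝ)..1, h γ) + ∫ γ in (0:ℝ)..1, h (1 - γ)) :=
  hm_convex_HH_second_general ν μ m hν hνμ hm h hh hhint G hGnonneg hG
end

section
/- Let h be nonnegative with 1/2 in its domain, G : [0,∞) → ℝ be (h,1)-convex (i.e., h-convex), and W : [ν, μ] → ℝ nonnegative, integrable, and symmetric about (ν+μ)/2 (i.e., W(ν+μ-x) = W(x)). If h(1/2) ≠ 0 and G, W are integrable on [ν, μ], then G((ν+μ)/2) · ∫_ν^μ W(x) dx ≤ 2·h(1/2) · ∫_ν^μ G(x)W(x) dx. -/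
/-! Apply `h`-convexity at `γ = 1/2` to the pair `x, ν + μ - x`, multiply by `W x` and integrate:
by the symmetry of `W`, the integral of `G (ν + μ - x) * W x` equals that of `G x * W x`. -/

open Set MeasureTheory

lemma apply_midpoint_le_of_hConvex {h G : ℝ → ℝ}
    (hG : ∀ x : ℝ, 0 ≤ x → ∀ y : ℝ, 0 ≤ y → ∀ γ ∈ Icc (0:ℝ) 1,
      G (γ * x + (1 - γ) * y) ≤ h γ * G x + h (1 - γ) * G y)
    {x y : ℝ} (hx : 0 ≤ x) (hy : 0 ≤ y) :
    G ((x + y) / 2) ≤ h (1/2) * (G x + G y) := by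
  have hconv := hG x hx y hy (1/2) ⟨by norm_num, by norm_num⟩
  rw [show (1:ℝ) - 1/2 = 1/2 by norm_num] at hconv
  calc G ((x + y) / 2) = G (1/2 * x + 1/2 * y) := by ring_nf
    _ ≤ h (1/2) * (G x + G y) := by linarith

section Reflection

variable {a b : ℝ} {f W : ℝ → ℝ}

lemma IntervalIntegrable.comp_reflect_mul_of_symm
    (hW : EqOn (fun x => W (a + b - x)) W (uIcc a b))
    (hfW : IntervalIntegrable (fun x => f x * W x) volume a b) :
    IntervalIntegrable (fun x => f (a + b - x) * W x) volume a b := by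
  have hrefl : IntervalIntegrable (fun x => f (a + b - x) * W (a + b - x)) volume a b := by
    simpa using (hfW.comp_sub_left (a + b)).symm
  refine hrefl.congr ?_
  exact fun x hx => by simp only [hW (uIoc_subset_uIcc hx)]

lemma integral_comp_reflect_mul_of_symm
    (hW : EqOn (fun x => W (a + b - x)) W (uIcc a b)) :
    ∫ x in a..b, f (a + b - x) * W x = ∫ x in a..b, f x * W x := by
  calc ∫ x in a..b, f (a + b - x) * W x
      = ∫ x in a..b, f (a + b - x) * W (a + b - x) :=
        intervalIntegral.integral_congr fun x hx => by simp only [hW hx]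
    _ = ∫ x in a..b, f x * W x := by
        simpa using intervalIntegral.integral_comp_sub_left (fun x => f x * W x) (a + b)
          (a := a) (b := b)

end Reflection

theorem h_convex_fejer_left_general
    (ν μ : ℝ) (hν : 0 ≤ ν) (hνμ : ν < μ)
    (h : ℝ → ℝ)
    (G W : ℝ → ℝ)
    (hG : ∀ x : ℝ, 0 ≤ x → ∀ y : ℝ, 0 ≤ y → ∀ γ ∈ Set.Icc (0:ℝ) 1,
      G (γ * x + (1 - γ) * y) ≤ h γ * G x + h (1 - γ) * G y)
    (hWnonneg : ∀ x ∈ Set.Icc ν μ, 0 ≤ W x)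
    (hWsym : ∀ x ∈ Set.Icc ν μ, W (ν + μ - x) = W x)
    (hWint : IntervalIntegrable W MeasureTheory.volume ν μ)
    (hGWint : IntervalIntegrable (fun x => G x * W x) MeasureTheory.volume ν μ) :
    G ((ν + μ) / 2) * (∫ x in ν..μ, W x) ≤ 2 * h (1/2) * ∫ x in ν..μ, G x * W x := by
  have hW : EqOn (fun x => W (ν + μ - x)) W (uIcc ν μ) := by
    rwa [uIcc_of_le hνμ.le]
  have hrefl := hGWint.comp_reflect_mul_of_symm hW
  have hpointwise : ∀ x ∈ Icc ν μ,
      G ((ν + μ) / 2) * W x ≤ h (1/2) * (G x * W x + G (ν + μ - x) * W x) := by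
    intro x hx
    have hmid := apply_midpoint_le_of_hConvex hG (hν.trans hx.1)
      (by linarith [hx.2] : 0 ≤ ν + μ - x)
    rw [show (x + (ν + μ - x)) / 2 = (ν + μ) / 2 by ring] at hmid
    calc G ((ν + μ) / 2) * W x ≤ h (1/2) * (G x + G (ν + μ - x)) * W x :=
          mul_le_mul_of_nonneg_right hmid (hWnonneg x hx)
      _ = h (1/2) * (G x * W x + G (ν + μ - x) * W x) := by ring
  have hmono := intervalIntegral.integral_mono_on hνμ.le (hWint.const_mul _)
    ((hGWint.add hrefl).const_mul _) hpointwise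
  rw [intervalIntegral.integral_const_mul, intervalIntegral.integral_const_mul,
    intervalIntegral.integral_add hGWint hrefl,
    integral_comp_reflect_mul_of_symm hW] at hmono
  linarith

theorem h_convex_fejer_left
    (ν μ : ℝ) (hν : 0 ≤ ν) (hνμ : ν < μ)
    (h : ℝ → ℝ) (hh : ∀ γ ∈ Set.Icc (0:ℝ) 1, 0 ≤ h γ) (hhalf : h (1/2) ≠ 0)
    (G W : ℝ → ℝ)
    (hGnonneg : ∀ x : ℝ, 0 ≤ x → 0 ≤ G x)
    (hG : ∀ x : ℝ, 0 ≤ x → ∀ y : ℝ, 0 ≤ y → ∀ γ ∈ Set.Icc (0:ℝ) 1,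
      G (γ * x + (1 - γ) * y) ≤ h γ * G x + h (1 - γ) * G y)
    (hWnonneg : ∀ x ∈ Set.Icc ν μ, 0 ≤ W x)
    (hWsym : ∀ x ∈ Set.Icc ν μ, W (ν + μ - x) = W x)
    (hWint : IntervalIntegrable W MeasureTheory.volume ν μ)
    (hGint : IntervalIntegrable G MeasureTheory.volume ν μ)
    (hGWint : IntervalIntegrable (fun x => G x * W x) MeasureTheory.volume ν μ) :
    G ((ν + μ) / 2) * (∫ x in ν..μ, W x) ≤ 2 * h (1/2) * ∫ x in ν..μ, G x * W x :=
  h_convex_fejer_left_general ν μ hν hνμ h G W hG hWnonneg hWsym hWint hGWint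
end

section
/- Let m ∈ (0,1], h nonnegative with 1/2 in its domain and h(1/2) ≠ 0, G a nonnegative (h,m)-convex function defined on an interval containing [ν, μ] and [ν/m, μ/m], and W : [ν, μ] → ℝ nonnegative, integrable, and symmetric about (ν+μ)/2. Then G((ν+μ)/2) · ∫_ν^μ W(x) dx ≤ h(1/2) · ∫_ν^μ [G(x) + m·G(x/m)] · W(x) dx. -/
open MeasureTheory

theorem hm_convex_fejer_left
    (ν μ m : ℝ) (hνμ : ν < μ) (hm : m ∈ Set.Ioc (0:ℝ) 1)
    (J : Set ℝ) (hJint : Set.OrdConnected J)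
    (hJ : Set.Icc ν μ ⊆ J) (hJm : Set.Icc (ν / m) (μ / m) ⊆ J)
    (h : ℝ → ℝ) (hh : ∀ γ ∈ Set.Icc (0:ℝ) 1, 0 ≤ h γ) (hhalf : h (1/2) ≠ 0)
    (G W : ℝ → ℝ)
    (hGnonneg : ∀ x ∈ J, 0 ≤ G x)
    (hG : ∀ x ∈ J, ∀ y ∈ J, ∀ γ ∈ Set.Icc (0:ℝ) 1,
      G (γ * x + m * (1 - γ) * y) ≤ h γ * G x + m * h (1 - γ) * G y)
    (hWnonneg : ∀ x ∈ Set.Icc ν μ, 0 ≤ W x)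
    (hWsym : ∀ x ∈ Set.Icc ν μ, W (ν + μ - x) = W x)
    (hWint : IntervalIntegrable W MeasureTheory.volume ν μ)
    (hGWint : IntervalIntegrable (fun x => (G x + m * G (x / m)) * W x)
      MeasureTheory.volume ν μ) :
    G ((ν + μ) / 2) * (∫ x in ν..μ, W x)
      ≤ h (1/2) * ∫ x in ν..μ, (G x + m * G (x / m)) * W x := by
  obtain ⟨hm0, hm1⟩ := hm
  have hmne : m ≠ 0 := ne_of_gt hm0
  set c : ℝ := (ν + μ) / 2 with hc
  have hhalfmem : (1/2 : ℝ) ∈ Set.Icc (0:ℝ) 1 := by norm_num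
  have hh2 : 0 < h (1/2) := lt_of_le_of_ne (hh _ hhalfmem) (Ne.symm hhalf)
  set F : ℝ → ℝ := fun x => (G x + m * G (x / m)) * W x with hF
  have key : ∀ x ∈ Set.Icc ν μ,
      G c ≤ h (1/2) * (G x + m * G ((ν + μ - x) / m)) := by
    intro x hx
    have hy : (ν + μ - x) ∈ Set.Icc ν μ := ⟨by linarith [hx.2], by linarith [hx.1]⟩
    have hym : (ν + μ - x) / m ∈ Set.Icc (ν/m) (μ/m) :=
      ⟨by gcongr; exact hy.1, by gcongr; exact hy.2⟩
    have := hG x (hJ hx) _ (hJm hym) (1/2) hhalfmem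
    have harg : (1/2 : ℝ) * x + m * (1 - 1/2) * ((ν + μ - x) / m) = c := by
      field_simp
      ring
    rw [harg] at this
    calc G c ≤ h (1/2) * G x + m * h (1 - 1/2) * G ((ν + μ - x) / m) := this
      _ = h (1/2) * (G x + m * G ((ν + μ - x) / m)) := by norm_num; ring
  have key2 : ∀ x ∈ Set.Icc ν μ,
      2 * (G c * W x) ≤ h (1/2) * (F x + F (ν + μ - x)) := by
    intro x hx
    have hx' : ν + μ - x ∈ Set.Icc ν μ := ⟨by linarith [hx.2], by linarith [hx.1]⟩
    have b1 := key x hx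
    have b2 := key _ hx'
    have hw := hWnonneg x hx
    have hw' : W (ν + μ - x) = W x := hWsym x hx
    have e : ν + μ - (ν + μ - x) = x := by ring
    rw [e] at b2
    have m1 : G c * W x ≤ h (1/2) * (G x + m * G ((ν+μ-x)/m)) * W x :=
      mul_le_mul_of_nonneg_right b1 hw
    have m2 : G c * W x ≤ h (1/2) * (G (ν+μ-x) + m * G (x/m)) * W x :=
      mul_le_mul_of_nonneg_right b2 hw
    simp only [hF]
    rw [hw']
    nlinarith [m1, m2]
  have hFrefl : IntervalIntegrable (fun x => F (ν + μ - x)) volume ν μ := by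
    have := (hGWint.comp_sub_left (ν + μ))
    simpa using this.symm
  have hint1 : IntervalIntegrable (fun x => 2 * (G c * W x)) volume ν μ := by
    have := (hWint.const_mul (2 * G c))
    simpa [mul_assoc] using this
  have hint2 : IntervalIntegrable (fun x => h (1/2) * (F x + F (ν + μ - x)))
      volume ν μ := (hGWint.add hFrefl).const_mul _
  have hmono := intervalIntegral.integral_mono_on (le_of_lt hνμ) hint1 hint2 key2
  have hrefl : (∫ x in ν..μ, F (ν + μ - x)) = ∫ x in ν..μ, F x := by
    have := intervalIntegral.integral_comp_sub_left (a := ν) (b := μ) F (ν + μ)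
    simpa using this
  have hrhs : (∫ x in ν..μ, h (1/2) * (F x + F (ν + μ - x)))
      = h (1/2) * (2 * ∫ x in ν..μ, F x) := by
    rw [intervalIntegral.integral_const_mul,
      intervalIntegral.integral_add hGWint hFrefl, hrefl]
    ring
  have hlhs : (∫ x in ν..μ, 2 * (G c * W x)) = 2 * (G c * ∫ x in ν..μ, W x) := by
    simp_rw [show ∀ x : ℝ, 2 * (G c * W x) = (2 * G c) * W x from fun x => by ring,
      intervalIntegral.integral_const_mul]
    ring
  rw [hrhs, hlhs] at hmono
  have hgoal : h (1/2) * ∫ x in ν..μ, (G x + m * G (x / m)) * W x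
      = h (1/2) * ∫ x in ν..μ, F x := rfl
  rw [hgoal]
  linarith
end

section
/- Let G be continuously differentiable on an open interval containing [ν, μ] with ν < μ, and let W : [ν, μ] → ℝ be nonnegative, continuous, and symmetric about (ν+μ)/2. Then ((G(ν)+G(μ))/2) · ∫_ν^μ W(x) dx − ∫_ν^μ W(x)G(x) dx = ((μ-ν)/4) · ∫_0^1 [∫_{m(γ)}^{n(γ)} W(x) dx] · (G'(n(γ)) − G'(m(γ))) dγ, where m(γ) = γν + (1-γ)(ν+μ)/2 and n(γ) = γμ + (1-γ)(ν+μ)/2. -/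
/-
Write `m γ, n γ` for the endpoints of the inner integral, `Φ γ = ∫_{m γ}^{n γ} W` and
`Ψ γ = G (n γ) + G (m γ)`. Then `Ψ' = (μ - ν)/2 · (G' ∘ n - G' ∘ m)`, and integration
by parts on `[0, 1]` gives `∫₀¹ Φ Ψ' = Φ(1) Ψ(1) - ∫₀¹ Φ' Ψ`, where
`Φ(1) Ψ(1) = (G ν + G μ) ∫_ν^μ W`.
Since `W (m γ) = W (n γ)`, the product `Φ' Ψ` is twice the derivative of
`γ ↦ ∫_{m γ}^{n γ} W G`, hence `∫₀¹ Φ' Ψ = 2 ∫_ν^μ W G`.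
-/

open intervalIntegral Set MeasureTheory

theorem hasDerivAt_integral_of_hasDerivAt_bounds {f : ℝ → ℝ} {a b : ℝ}
    (hf : ContinuousOn f (Ioo a b)) {p q : ℝ → ℝ} {p' q' t : ℝ}
    (hp : HasDerivAt p p' t) (hq : HasDerivAt q q' t) (hpt : p t ∈ Ioo a b)
    (hqt : q t ∈ Ioo a b) :
    HasDerivAt (fun s => ∫ x in p s..q s, f x) (f (q t) * q' - f (p t) * p') t := by
  have hint : ∀ y ∈ Ioo a b, IntervalIntegrable f volume (p t) y := fun y hy =>
    (hf.mono (ordConnected_Ioo.uIcc_subset hpt hy)).intervalIntegrable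
  have hprim : ∀ y ∈ Ioo a b, HasDerivAt (fun u => ∫ x in p t..u, f x) (f y) y := fun y hy =>
    integral_hasDerivAt_right (hint y hy)
      (hf.stronglyMeasurableAtFilter isOpen_Ioo y hy) (hf.continuousAt (isOpen_Ioo.mem_nhds hy))
  have hdiff := ((hprim _ hqt).comp t hq).sub ((hprim _ hpt).comp t hp)
  refine hdiff.congr_of_eventuallyEq ?_
  filter_upwards [hp.continuousAt.preimage_mem_nhds (isOpen_Ioo.mem_nhds hpt),
    hq.continuousAt.preimage_mem_nhds (isOpen_Ioo.mem_nhds hqt)] with s hps hqs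
  exact (integral_interval_sub_left (hint _ hqs) (hint _ hps)).symm

theorem Convex.mul_add_one_sub_mul_mem {s : Set ℝ} (hs : Convex ℝ s) {x c γ : ℝ}
    (hx : x ∈ s) (hc : c ∈ s) (hγ : γ ∈ Icc (0 : ℝ) 1) : γ * x + (1 - γ) * c ∈ s :=
  hs hx hc hγ.1 (sub_nonneg.2 hγ.2) (add_sub_cancel _ _)

theorem hasDerivAt_mul_add_one_sub_mul (x c t : ℝ) :
    HasDerivAt (fun γ => γ * x + (1 - γ) * c) (x - c) t := by
  have haffine : (fun γ => γ * x + (1 - γ) * c) = fun γ => (x - c) * γ + c := by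
    ext γ; ring
  simpa [haffine] using ((hasDerivAt_id t).const_mul (x - c)).add_const c

theorem hasDerivAt_integral_segment {f : ℝ → ℝ} {a b x y c γ : ℝ}
    (hf : ContinuousOn f (Ioo a b)) (hx : x ∈ Ioo a b) (hy : y ∈ Ioo a b) (hc : c ∈ Ioo a b)
    (hγ : γ ∈ Icc (0 : ℝ) 1) :
    HasDerivAt (fun γ => ∫ t in γ * x + (1 - γ) * c..γ * y + (1 - γ) * c, f t)
      (f (γ * y + (1 - γ) * c) * (y - c) - f (γ * x + (1 - γ) * c) * (x - c)) γ :=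
  hasDerivAt_integral_of_hasDerivAt_bounds hf (hasDerivAt_mul_add_one_sub_mul x c γ)
    (hasDerivAt_mul_add_one_sub_mul y c γ) ((convex_Ioo a b).mul_add_one_sub_mul_mem hx hc hγ)
    ((convex_Ioo a b).mul_add_one_sub_mul_mem hy hc hγ)

theorem ContinuousOn.intervalIntegrable_comp_mul_add_one_sub_mul {f : ℝ → ℝ} {s : Set ℝ}
    (hf : ContinuousOn f s) (hs : Convex ℝ s) {x c : ℝ} (hx : x ∈ s) (hc : c ∈ s) :
    IntervalIntegrable (fun γ => f (γ * x + (1 - γ) * c)) volume 0 1 :=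
  (hf.comp (by fun_prop : Continuous fun γ : ℝ => γ * x + (1 - γ) * c).continuousOn
    fun _ hγ => hs.mul_add_one_sub_mul_mem hx hc hγ).intervalIntegrable_of_Icc zero_le_one

theorem integral_deriv_window_mul_sum_eq {ν μ a b : ℝ} {W G : ℝ → ℝ} (hνμ : ν ≤ μ)
    (hab : Icc ν μ ⊆ Ioo a b) (hW : ContinuousOn W (Ioo a b)) (hG : ContinuousOn G (Ioo a b))
    (hWsym : ∀ x ∈ Icc ν μ, W (ν + μ - x) = W x) :
    ∫ γ in (0:ℝ)..1,
      (W (γ * μ + (1 - γ) * ((ν + μ) / 2)) * (μ - (ν + μ) / 2)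
          - W (γ * ν + (1 - γ) * ((ν + μ) / 2)) * (ν - (ν + μ) / 2))
        * (G (γ * μ + (1 - γ) * ((ν + μ) / 2)) + G (γ * ν + (1 - γ) * ((ν + μ) / 2)))
      = 2 * ∫ x in ν..μ, W x * G x := by
  set c := (ν + μ) / 2 with hc
  have hνmem : ν ∈ Icc ν μ := left_mem_Icc.2 hνμ
  have hμmem : μ ∈ Icc ν μ := right_mem_Icc.2 hνμ
  have hcmem : c ∈ Icc ν μ := ⟨by linarith, by linarith⟩
  have hsym : ∀ γ ∈ uIcc (0:ℝ) 1,
      W (γ * ν + (1 - γ) * c) = W (γ * μ + (1 - γ) * c) := by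
    intro γ hγ
    rw [uIcc_of_le zero_le_one] at hγ
    rw [← hWsym _ ((convex_Icc ν μ).mul_add_one_sub_mul_mem hμmem hcmem hγ)]
    congr 1
    ring
  have hWG : ContinuousOn (fun x => W x * G x) (Ioo a b) := hW.mul hG
  have hK : ∀ γ ∈ uIcc (0:ℝ) 1, _ := fun γ hγ =>
    hasDerivAt_integral_segment hWG (hab hνmem) (hab hμmem) (hab hcmem)
      (uIcc_of_le (zero_le_one' ℝ) ▸ hγ)
  -- by symmetry of `W`, the integrand is twice the derivative of `γ ↦ ∫_{m γ}^{n γ} W G`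
  have hpointwise : ∀ γ ∈ uIcc (0:ℝ) 1,
      (W (γ * μ + (1 - γ) * c) * (μ - c) - W (γ * ν + (1 - γ) * c) * (ν - c))
        * (G (γ * μ + (1 - γ) * c) + G (γ * ν + (1 - γ) * c))
      = 2 * (W (γ * μ + (1 - γ) * c) * G (γ * μ + (1 - γ) * c) * (μ - c)
        - W (γ * ν + (1 - γ) * c) * G (γ * ν + (1 - γ) * c) * (ν - c)) := by
    intro γ hγ
    rw [hsym γ hγ, hc]
    ring
  rw [integral_congr hpointwise, intervalIntegral.integral_const_mul,
    integral_eq_sub_of_hasDerivAt hK ?_]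
  · simp
  · exact ((hWG.intervalIntegrable_comp_mul_add_one_sub_mul (convex_Ioo a b) (hab hμmem)
      (hab hcmem)).mul_const _).sub
      ((hWG.intervalIntegrable_comp_mul_add_one_sub_mul (convex_Ioo a b) (hab hνmem)
      (hab hcmem)).mul_const _)

theorem fejer_identity_of_continuousOn {ν μ a b : ℝ} {G W : ℝ → ℝ} (hνμ : ν ≤ μ)
    (hab : Icc ν μ ⊆ Ioo a b) (hG : ContDiffOn ℝ 1 G (Ioo a b))
    (hW : ContinuousOn W (Ioo a b)) (hWsym : ∀ x ∈ Icc ν μ, W (ν + μ - x) = W x) :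
    (G ν + G μ) / 2 * (∫ x in ν..μ, W x) - (∫ x in ν..μ, W x * G x)
      = (μ - ν) / 4 *
        ∫ γ in (0:ℝ)..1,
          (∫ x in (γ * ν + (1 - γ) * ((ν + μ) / 2))..(γ * μ + (1 - γ) * ((ν + μ) / 2)), W x)
            * (deriv G (γ * μ + (1 - γ) * ((ν + μ) / 2))
                - deriv G (γ * ν + (1 - γ) * ((ν + μ) / 2))) := by
  set c := (ν + μ) / 2 with hc
  have hν : ν ∈ Ioo a b := hab (left_mem_Icc.2 hνμ)
  have hμ : μ ∈ Ioo a b := hab (right_mem_Icc.2 hνμ)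
  have hcmem : c ∈ Ioo a b := hab ⟨by linarith, by linarith⟩
  have hseg : ∀ x ∈ Ioo a b, ∀ γ ∈ uIcc (0:ℝ) 1, γ * x + (1 - γ) * c ∈ Ioo a b :=
    fun x hx γ hγ => (convex_Ioo a b).mul_add_one_sub_mul_mem hx hcmem
      (uIcc_of_le (zero_le_one' ℝ) ▸ hγ)
  have hGderiv : ∀ x ∈ Ioo a b, HasDerivAt G (deriv G x) x := fun x hx =>
    ((hG.differentiableOn one_ne_zero).differentiableAt (isOpen_Ioo.mem_nhds hx)).hasDerivAt
  have hG' : ContinuousOn (deriv G) (Ioo a b) :=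
    hG.continuousOn_deriv_of_isOpen isOpen_Ioo le_rfl
  have hu : ∀ γ ∈ uIcc (0:ℝ) 1, _ := fun γ hγ => hasDerivAt_integral_segment hW hν hμ hcmem
    (uIcc_of_le (zero_le_one' ℝ) ▸ hγ)
  have hv : ∀ γ ∈ uIcc (0:ℝ) 1,
      HasDerivAt (fun γ => G (γ * μ + (1 - γ) * c) + G (γ * ν + (1 - γ) * c))
        ((μ - ν) / 2 * (deriv G (γ * μ + (1 - γ) * c) - deriv G (γ * ν + (1 - γ) * c))) γ := by
    intro γ hγ
    have hGμ := (hGderiv _ (hseg μ hμ γ hγ)).comp γ (hasDerivAt_mul_add_one_sub_mul μ c γ)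
    have hGν := (hGderiv _ (hseg ν hν γ hγ)).comp γ (hasDerivAt_mul_add_one_sub_mul ν c γ)
    refine (hGμ.add hGν).congr_deriv ?_
    rw [hc]
    ring
  have hIBP := integral_mul_deriv_eq_deriv_mul hu hv ?_ ?_
  · rw [integral_deriv_window_mul_sum_eq hνμ hab hW hG.continuousOn hWsym] at hIBP
    simp only [mul_left_comm _ ((μ - ν) / 2), intervalIntegral.integral_const_mul, one_mul,
      sub_self, zero_mul, add_zero, sub_zero, zero_add, integral_same] at hIBP
    linear_combination -hIBP / 2
  · exact
      ((hW.intervalIntegrable_comp_mul_add_one_sub_mul (convex_Ioo a b) hμ hcmem).mul_const _).sub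
        ((hW.intervalIntegrable_comp_mul_add_one_sub_mul (convex_Ioo a b) hν hcmem).mul_const _)
  · exact ((hG'.intervalIntegrable_comp_mul_add_one_sub_mul (convex_Ioo a b) hμ hcmem).sub
      (hG'.intervalIntegrable_comp_mul_add_one_sub_mul (convex_Ioo a b) hν hcmem)).const_mul _

theorem fejer_identity_general
    (ν μ a b : ℝ) (hνμ : ν < μ) (hab : Set.Icc ν μ ⊆ Set.Ioo a b)
    (G W : ℝ → ℝ)
    (hG : ContDiffOn ℝ 1 G (Set.Ioo a b))
    (hWcont : ContinuousOn W (Set.Icc ν μ))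
    (hWsym : ∀ x ∈ Set.Icc ν μ, W (ν + μ - x) = W x) :
    (G ν + G μ) / 2 * (∫ x in ν..μ, W x) - (∫ x in ν..μ, W x * G x)
      = (μ - ν) / 4 *
        ∫ γ in (0:ℝ)..1,
          (∫ x in (γ * ν + (1 - γ) * ((ν + μ) / 2))..(γ * μ + (1 - γ) * ((ν + μ) / 2)), W x)
            * (deriv G (γ * μ + (1 - γ) * ((ν + μ) / 2))
                - deriv G (γ * ν + (1 - γ) * ((ν + μ) / 2))) := by
  -- `W` extended continuously past `[ν, μ]`, so that the FTC applies at the endpoints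
  set W' := IccExtend hνμ.le ((Icc ν μ).domRestrict W)
  have hW'eq : EqOn W' W (Icc ν μ) := fun x hx => IccExtend_of_mem _ _ hx
  have hν : ν ∈ Icc ν μ := left_mem_Icc.2 hνμ.le
  have hμ : μ ∈ Icc ν μ := right_mem_Icc.2 hνμ.le
  have hint {x y : ℝ} (hx : x ∈ Icc ν μ) (hy : y ∈ Icc ν μ) :
      ∫ t in x..y, W' t = ∫ t in x..y, W t :=
    integral_congr fun t ht => hW'eq (uIcc_subset_Icc hx hy ht)
  have hintG : ∫ t in ν..μ, W' t * G t = ∫ t in ν..μ, W t * G t :=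
    integral_congr fun t ht => by rw [hW'eq (uIcc_subset_Icc hν hμ ht)]
  have hseg {x : ℝ} (hx : x ∈ Icc ν μ) {γ : ℝ} (hγ : γ ∈ uIcc (0:ℝ) 1) :
      γ * x + (1 - γ) * ((ν + μ) / 2) ∈ Icc ν μ :=
    (convex_Icc ν μ).mul_add_one_sub_mul_mem hx ⟨by linarith, by linarith⟩
      (uIcc_of_le (zero_le_one' ℝ) ▸ hγ)
  have key := fejer_identity_of_continuousOn (W := W') hνμ.le hab hG
    (continuous_IccExtend_iff.2 hWcont.domRestrict).continuousOn
    (fun x hx => by rw [hW'eq hx, hW'eq ⟨by linarith [hx.2], by linarith [hx.1]⟩, hWsym x hx])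
  rw [← hint hν hμ, ← hintG, key]
  congr 1
  refine integral_congr fun γ hγ => ?_
  rw [hint (hseg hν hγ) (hseg hμ hγ)]

theorem fejer_identity
    (ν μ a b : ℝ) (hνμ : ν < μ) (hab : Set.Icc ν μ ⊆ Set.Ioo a b)
    (G W : ℝ → ℝ)
    (hG : ContDiffOn ℝ 1 G (Set.Ioo a b))
    (hWnonneg : ∀ x ∈ Set.Icc ν μ, 0 ≤ W x)
    (hWcont : ContinuousOn W (Set.Icc ν μ))
    (hWsym : ∀ x ∈ Set.Icc ν μ, W (ν + μ - x) = W x) :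
    (G ν + G μ) / 2 * (∫ x in ν..μ, W x) - (∫ x in ν..μ, W x * G x)
      = (μ - ν) / 4 *
        ∫ γ in (0:ℝ)..1,
          (∫ x in (γ * ν + (1 - γ) * ((ν + μ) / 2))..(γ * μ + (1 - γ) * ((ν + μ) / 2)), W x)
            * (deriv G (γ * μ + (1 - γ) * ((ν + μ) / 2))
                - deriv G (γ * ν + (1 - γ) * ((ν + μ) / 2))) :=
  fejer_identity_general ν μ a b hνμ hab G W hG hWcont hWsym
end

section
/- Let G be continuously differentiable on an open interval containing [ν, μ] and the point (ν+μ)/(2m), with m ∈ (0,1], and let W : [ν, μ] → ℝ be nonnegative, continuous, and symmetric about (ν+μ)/2. If |G'| is m-convex, then |((G(ν)+G(μ))/2) ∫_ν^μ W(x) dx − ∫_ν^μ W(x)G(x) dx| ≤ ((μ-ν)²/4) · ‖W‖_∞ · [ (1/3)(|G'(ν)| + |G'(μ)|) + (1/3)·m·|G'((ν+μ)/(2m))| ]. -/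
/-!
Integration by parts turns the left-hand side into `∫_ν^μ k G'` with
`k t = ∫_ν^t W - (∫_ν^μ W) / 2`. Symmetry of `W` makes `k t = ∫_c^t W` for the midpoint `c`,
so `|k t| ≤ ‖W‖_∞ |t - c|`. Since `c = m · (ν + μ) / (2m)`, every `t` of `[ν, c]` (resp. `[c, μ]`)
is a point `γ ν + m (1 - γ) (ν + μ) / (2m)` (resp. with `μ`), and `m`-convexity bounds `|G' t|`
by the linear interpolation between `|G'|` at the endpoint and `m |G'((ν + μ) / (2m))|` at `c`.
Integrating the resulting polynomial bound over each half gives the weights `1/3` and `1/6`.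
-/

open Set intervalIntegral
open MeasureTheory (volume)

def MConvexOn (m : ℝ) (s : Set ℝ) (f : ℝ → ℝ) : Prop :=
  ∀ x ∈ s, ∀ y ∈ s, ∀ γ ∈ Icc (0:ℝ) 1,
    f (γ * x + m * (1 - γ) * y) ≤ γ * f x + m * (1 - γ) * f y

theorem MConvexOn.le_of_mem_uIcc {m : ℝ} {s : Set ℝ} {f : ℝ → ℝ} (hf : MConvexOn m s f)
    {x y t : ℝ} (hx : x ∈ s) (hy : y ∈ s) (ht : t ∈ uIcc x (m * y)) (hne : x ≠ m * y) :
    f t ≤ ((m * y - t) * f x + (t - x) * (m * f y)) / (m * y - x) := by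
  have hne' : m * y - x ≠ 0 := sub_ne_zero.2 hne.symm
  have hγ : (m * y - t) / (m * y - x) ∈ Icc (0:ℝ) 1 := by
    rcases le_total x (m * y) with h | h
    · rw [uIcc_of_le h] at ht
      have hpos : 0 < m * y - x := sub_pos.2 (lt_of_le_of_ne h hne)
      exact ⟨div_nonneg (by linarith [ht.2]) hpos.le, (div_le_one hpos).2 (by linarith [ht.1])⟩
    · rw [uIcc_of_ge h] at ht
      have hneg : m * y - x < 0 := sub_neg.2 (lt_of_le_of_ne h hne.symm)
      exact ⟨div_nonneg_of_nonpos (by linarith [ht.1]) hneg.le,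
        (div_le_one_of_neg hneg).2 (by linarith [ht.2])⟩
  have key := hf x hx y hy _ hγ
  have hpt : (m * y - t) / (m * y - x) * x + m * (1 - (m * y - t) / (m * y - x)) * y = t := by
    field_simp; ring
  rw [hpt] at key
  convert key using 1
  field_simp; ring

theorem integral_mul_linear_interpolation (p q A C : ℝ) :
    ∫ t in q..p, (p - t) * ((p - t) * A + (t - q) * C) = (p - q) ^ 3 * (A / 3 + C / 6) := by
  have hpoly : (fun t => (p - t) * ((p - t) * A + (t - q) * C)) =
      fun t => (A - C) * t ^ 2 + (C * p + C * q - 2 * A * p) * t + (A * p ^ 2 - C * p * q) := by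
    funext t; ring
  rw [hpoly, integral_add, integral_add, integral_const_mul, integral_const_mul, integral_pow,
    integral_id, integral_const, smul_eq_mul]
  · ring
  all_goals exact Continuous.intervalIntegrable (by fun_prop) _ _

theorem abs_integral_mul_le_of_le_interpolation {u v : ℝ → ℝ} {p q A B C : ℝ}
    (huv : IntervalIntegrable (fun t => u t * v t) volume p q)
    (hu : ∀ t ∈ uIcc p q, |u t| ≤ B * |t - p|)
    (hv : ∀ t ∈ uIcc p q, |v t| ≤ ((p - t) * A + (t - q) * C) / (p - q)) :
    |∫ t in p..q, u t * v t| ≤ B * (p - q) ^ 2 * (A / 3 + C / 6) := by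
  wlog hqp : q ≤ p generalizing u v p q
  · have hrefl := this (u := fun t => u (-t)) (v := fun t => v (-t)) (p := -p) (q := -q)
      ((IntervalIntegrable.iff_comp_neg (f := fun t => u t * v t)).mp huv)
      (fun t ht => ?_) (fun t ht => ?_) (by linarith)
    · rwa [integral_comp_neg (fun t => u t * v t), neg_neg, neg_neg,
        integral_symm, abs_neg, show -p - -q = -(p - q) by ring, neg_sq] at hrefl
    all_goals
      have ht' : -t ∈ uIcc p q := by
        simpa only [image_neg_uIcc, neg_neg] using mem_image_of_mem Neg.neg ht
    · rw [show t - -p = -(-t - p) by ring, abs_neg]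
      exact hu _ ht'
    · convert hv _ ht' using 1
      rw [← neg_div_neg_eq]; ring_nf
  rw [uIcc_of_ge hqp] at hu hv
  rw [integral_symm, abs_neg]
  have hbound : ∀ t ∈ Icc q p,
      |u t * v t| ≤ B / (p - q) * ((p - t) * ((p - t) * A + (t - q) * C)) := by
    intro t ht
    rw [abs_mul]
    calc |u t| * |v t| ≤ B * (p - t) * (((p - t) * A + (t - q) * C) / (p - q)) := by
          have := hu t ht
          rw [abs_sub_comm, abs_of_nonneg (sub_nonneg.2 ht.2)] at this
          exact mul_le_mul this (hv t ht) (abs_nonneg _) ((abs_nonneg _).trans this)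
      _ = _ := by ring
  calc |∫ t in q..p, u t * v t|
      ≤ ∫ t in q..p, |u t * v t| := abs_integral_le_integral_abs hqp
    _ ≤ ∫ t in q..p, B / (p - q) * ((p - t) * ((p - t) * A + (t - q) * C)) :=
        integral_mono_on hqp huv.symm.abs (Continuous.intervalIntegrable (by fun_prop) _ _) hbound
    _ = B * (p - q) ^ 2 * (A / 3 + C / 6) := by
        rcases hqp.eq_or_lt with h | h
        · simp [h]
        · rw [integral_const_mul, integral_mul_linear_interpolation]
          field_simp [(sub_pos.2 h).ne']

noncomputable def centeredPrimitive (W : ℝ → ℝ) (a b t : ℝ) : ℝ :=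
  (∫ x in a..t, W x) - (∫ x in a..b, W x) / 2

theorem integral_mul_sub_integral_mul_eq_integral_centeredPrimitive_mul {W G G' : ℝ → ℝ}
    {a b : ℝ} (hW : ContinuousOn W (uIcc a b)) (hG : ∀ x ∈ uIcc a b, HasDerivAt G (G' x) x)
    (hG' : IntervalIntegrable G' volume a b) :
    (G a + G b) / 2 * (∫ x in a..b, W x) - ∫ x in a..b, W x * G x
      = ∫ t in a..b, centeredPrimitive W a b t * G' t := by
  set P : ℝ → ℝ := fun t => ∫ x in a..t, W x
  have hWi : IntervalIntegrable W volume a b := hW.intervalIntegrable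
  have hP : ContinuousOn P (uIcc a b) := continuousOn_primitive_interval' hWi left_mem_uIcc
  have hP' : ∀ x ∈ Ioo (min a b) (max a b), HasDerivAt P (W x) x := fun x hx =>
    integral_hasDerivAt_right (hWi.mono_set (uIcc_subset_uIcc_left (Ioo_subset_Icc_self hx)))
      ((hW.mono Ioo_subset_Icc_self).stronglyMeasurableAtFilter isOpen_Ioo x hx)
      (hW.continuousAt (Icc_mem_nhds hx.1 hx.2))
  have hGc : ContinuousOn G (uIcc a b) := fun x hx => (hG x hx).continuousAt.continuousWithinAt
  have hparts : ∫ t in a..b, P t * G' t = P b * G b - P a * G a - ∫ x in a..b, W x * G x :=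
    integral_mul_deriv_eq_deriv_mul_of_hasDerivAt hP hGc hP'
      (fun x hx => hG x (Ioo_subset_Icc_self hx)) hWi hG'
  have hftc : ∫ t in a..b, G' t = G b - G a := integral_eq_sub_of_hasDerivAt hG hG'
  have hPa : P a = 0 := integral_same
  calc (G a + G b) / 2 * (∫ x in a..b, W x) - ∫ x in a..b, W x * G x
      = (∫ t in a..b, P t * G' t) - P b / 2 * ∫ t in a..b, G' t := by
        rw [hparts, hftc, hPa]; ring
    _ = ∫ t in a..b, centeredPrimitive W a b t * G' t := by
        rw [← integral_const_mul, ← integral_sub (hG'.continuousOn_mul hP) (hG'.const_mul _)]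
        congr 1 with t
        simp only [centeredPrimitive, P]; ring

theorem continuousOn_centeredPrimitive {W : ℝ → ℝ} {a b : ℝ}
    (hW : IntervalIntegrable W volume a b) :
    ContinuousOn (centeredPrimitive W a b) (uIcc a b) :=
  (continuousOn_primitive_interval' hW left_mem_uIcc).sub continuousOn_const

theorem integral_left_half_eq_right_half_of_symm {W : ℝ → ℝ} {a b : ℝ} (hab : a ≤ b)
    (hsym : ∀ x ∈ Icc a b, W (a + b - x) = W x) :
    ∫ x in a..(a + b) / 2, W x = ∫ x in (a + b) / 2..b, W x := by
  have hrefl := integral_comp_sub_left W (a + b) (a := a) (b := (a + b) / 2)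
  rw [show a + b - (a + b) / 2 = (a + b) / 2 by ring, add_sub_cancel_left] at hrefl
  rw [← hrefl]
  refine integral_congr fun x hx => (hsym x ?_).symm
  rw [uIcc_of_le (by linarith)] at hx
  exact ⟨hx.1, by linarith [hx.2]⟩

theorem centeredPrimitive_eq_integral_from_midpoint {W : ℝ → ℝ} {a b t : ℝ}
    (hW : IntervalIntegrable W volume a b)
    (hsym : ∀ x ∈ Icc a b, W (a + b - x) = W x) (ht : t ∈ Icc a b) :
    centeredPrimitive W a b t = ∫ x in (a + b) / 2..t, W x := by
  have hab : a ≤ b := ht.1.trans ht.2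
  have hint : ∀ y ∈ Icc a b, IntervalIntegrable W volume a y := fun y hy =>
    hW.mono_set (uIcc_subset_uIcc_left (by rw [uIcc_of_le hab]; exact hy))
  have hc : (a + b) / 2 ∈ Icc a b := ⟨by linarith, by linarith⟩
  have hsplit := integral_add_adjacent_intervals (hint _ hc)
    ((hW.mono_set (uIcc_subset_uIcc_right (by rw [uIcc_of_le hab]; exact hc))))
  rw [centeredPrimitive, ← hsplit, ← integral_left_half_eq_right_half_of_symm hab hsym,
    ← integral_interval_sub_left (hint t ht) (hint _ hc)]
  ring

theorem abs_centeredPrimitive_le {W : ℝ → ℝ} {a b t B : ℝ}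
    (hW : IntervalIntegrable W volume a b)
    (hsym : ∀ x ∈ Icc a b, W (a + b - x) = W x) (hB : ∀ x ∈ Icc a b, |W x| ≤ B)
    (ht : t ∈ Icc a b) :
    |centeredPrimitive W a b t| ≤ B * |t - (a + b) / 2| := by
  rw [centeredPrimitive_eq_integral_from_midpoint hW hsym ht]
  have hc : (a + b) / 2 ∈ Icc a b := ⟨by linarith [ht.1, ht.2], by linarith [ht.1, ht.2]⟩
  simpa only [Real.norm_eq_abs] using norm_integral_le_of_norm_le_const fun x hx =>
    (Real.norm_eq_abs (W x)).trans_le (hB x (uIcc_subset_Icc hc ht (uIoc_subset_uIcc hx)))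

theorem abs_integral_centeredPrimitive_mul_le_of_mConvexOn {W f' : ℝ → ℝ} {s : Set ℝ}
    {a b m q y B : ℝ} (hf : MConvexOn m s fun x => |f' x|) (hq : q ∈ Icc a b) (hqs : q ∈ s)
    (hys : y ∈ s) (hmy : m * y = (a + b) / 2) (hqc : q ≠ (a + b) / 2)
    (hW : IntervalIntegrable W volume a b)
    (hsym : ∀ x ∈ Icc a b, W (a + b - x) = W x) (hB : ∀ x ∈ Icc a b, |W x| ≤ B)
    (hint : IntervalIntegrable (fun t => centeredPrimitive W a b t * f' t)
      volume ((a + b) / 2) q) :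
    |∫ t in (a + b) / 2..q, centeredPrimitive W a b t * f' t|
      ≤ B * ((a + b) / 2 - q) ^ 2 * (|f' q| / 3 + m * |f' y| / 6) := by
  have hc : (a + b) / 2 ∈ Icc a b := ⟨by linarith [hq.1, hq.2], by linarith [hq.1, hq.2]⟩
  refine abs_integral_mul_le_of_le_interpolation hint
    (fun t ht => abs_centeredPrimitive_le hW hsym hB (uIcc_subset_Icc hc hq ht)) (fun t ht => ?_)
  have := hf.le_of_mem_uIcc hqs hys (by rwa [hmy, uIcc_comm]) (by rwa [hmy])
  rwa [hmy] at this

theorem fejer_bound_m_convex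
    (ν μ m a b : ℝ) (hνμ : ν < μ) (hm : m ∈ Set.Ioc (0:ℝ) 1)
    (hab : Set.Icc ν μ ⊆ Set.Ioo a b) (hmid : (ν + μ) / (2 * m) ∈ Set.Ioo a b)
    (G W : ℝ → ℝ)
    (hG : ContDiffOn ℝ 1 G (Set.Ioo a b))
    (hG' : ∀ x ∈ Set.Ioo a b, ∀ y ∈ Set.Ioo a b, ∀ γ ∈ Set.Icc (0:ℝ) 1,
      |deriv G (γ * x + m * (1 - γ) * y)| ≤ γ * |deriv G x| + m * (1 - γ) * |deriv G y|)
    (hWnonneg : ∀ x ∈ Set.Icc ν μ, 0 ≤ W x)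
    (hWcont : ContinuousOn W (Set.Icc ν μ))
    (hWsym : ∀ x ∈ Set.Icc ν μ, W (ν + μ - x) = W x) :
    |(G ν + G μ) / 2 * (∫ x in ν..μ, W x) - ∫ x in ν..μ, W x * G x|
      ≤ (μ - ν) ^ 2 / 4 * sSup (W '' Set.Icc ν μ) *
        ((1/3) * (|deriv G ν| + |deriv G μ|)
          + (1/3) * m * |deriv G ((ν + μ) / (2 * m))|) := by
  set c := (ν + μ) / 2 with hc_def
  set d := (ν + μ) / (2 * m)
  set B := sSup (W '' Icc ν μ)
  have hmd : m * d = c := by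
    show m * ((ν + μ) / (2 * m)) = (ν + μ) / 2
    field_simp [hm.1.ne']
  have hνμI : uIcc ν μ = Icc ν μ := uIcc_of_le hνμ.le
  have hc : c ∈ Icc ν μ := ⟨by linarith, by linarith⟩
  have hWi : IntervalIntegrable W volume ν μ := hWcont.intervalIntegrable_of_Icc hνμ.le
  have hWB : ∀ x ∈ Icc ν μ, |W x| ≤ B := fun x hx => (abs_of_nonneg (hWnonneg x hx)).trans_le
    (le_csSup (isCompact_Icc.image_of_continuousOn hWcont).bddAbove (mem_image_of_mem W hx))
  have hGd : ∀ x ∈ uIcc ν μ, HasDerivAt G (deriv G x) x := fun x hx =>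
    ((hG.differentiableOn one_ne_zero).differentiableAt
      (isOpen_Ioo.mem_nhds (hab (hνμI ▸ hx)))).hasDerivAt
  have hG'c : ContinuousOn (deriv G) (Icc ν μ) :=
    (hG.continuousOn_deriv_of_isOpen isOpen_Ioo le_rfl).mono hab
  have hint : ∀ q ∈ Icc ν μ,
      IntervalIntegrable (fun t => centeredPrimitive W ν μ t * deriv G t) volume c q :=
    fun q hq => ((hνμI ▸ continuousOn_centeredPrimitive hWi).mul hG'c
      |>.mono (uIcc_subset_Icc hc hq)).intervalIntegrable
  have hhalf (q : ℝ) (hq : q ∈ Icc ν μ) (hqc : q ≠ c) :=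
    abs_integral_centeredPrimitive_mul_le_of_mConvexOn (f' := deriv G) hG' hq (hab hq) hmid hmd
      hqc hWi hWsym hWB (hint q hq)
  rw [integral_mul_sub_integral_mul_eq_integral_centeredPrimitive_mul (hνμI ▸ hWcont) hGd
      (hG'c.intervalIntegrable_of_Icc hνμ.le),
    ← integral_add_adjacent_intervals (hint ν ⟨le_rfl, hνμ.le⟩).symm (hint μ ⟨hνμ.le, le_rfl⟩),
    integral_symm c ν, neg_add_eq_sub]
  calc _ ≤ |∫ t in c..μ, centeredPrimitive W ν μ t * deriv G t|
        + |∫ t in c..ν, centeredPrimitive W ν μ t * deriv G t| := abs_sub _ _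
    _ ≤ _ := add_le_add (hhalf μ ⟨hνμ.le, le_rfl⟩ (by linarith))
        (hhalf ν ⟨le_rfl, hνμ.le⟩ (by linarith))
    _ = _ := by ring
end

section
/- Let G be continuously differentiable on an open interval containing [ν, μ] and (ν+μ)/(2m), with m ∈ (0,1] and s ∈ (0,1], and let W : [ν, μ] → ℝ be nonnegative, continuous, symmetric about (ν+μ)/2. If |G'| is (h,m)-convex with h(γ) = γ^s, then |((G(ν)+G(μ))/2) ∫_ν^μ W(x) dx − ∫_ν^μ W(x)G(x) dx| ≤ ((μ-ν)²/4) · ‖W‖_∞ · [ (1/(s+2))·(|G'(ν)| + |G'(μ)|) + 2m·B(2, s+1)·|G'((ν+μ)/(2m))| ], where B is the Euler Beta function. -/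
/-!
Integrating by parts against the primitive `K x = ∫_{(ν+μ)/2}^x W`, which is odd about the
midpoint because `W` is symmetric, turns the left-hand side into `∫_ν^μ K G'`, and
`|K x| ≤ ‖W‖_∞ |x - (ν+μ)/2|`. On the half ending at `e ∈ {ν, μ}` substitute
`x = (ν+μ)/2 + γ (e - (ν+μ)/2) = γ e + m (1-γ) (ν+μ)/(2m)`: the `(s,m)`-convexity of `|G'|`,
integrated against `γ`, yields `∫₀¹ γ^(s+1) = 1/(s+2)` and the Beta integral `∫₀¹ γ (1-γ)^s`.
-/

open Set MeasureTheory

lemma integral_mid_right_eq_left_of_symm {ν μ : ℝ} {W : ℝ → ℝ} (hle : ν ≤ μ)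
    (hWsym : ∀ x ∈ Icc ν μ, W (ν + μ - x) = W x) :
    ∫ x in (ν + μ) / 2..μ, W x = ∫ x in ν..(ν + μ) / 2, W x := by
  have hsub : uIcc ((ν + μ) / 2) μ ⊆ Icc ν μ := by
    rw [uIcc_of_le (by linarith)]; exact Icc_subset_Icc_left (by linarith)
  rw [intervalIntegral.integral_congr fun x hx => (hWsym x (hsub hx)).symm,
    intervalIntegral.integral_comp_sub_left W (ν + μ)]
  congr 1 <;> ring

lemma half_sum_mul_integral_sub_integral_mul_eq {ν μ : ℝ} {W G g : ℝ → ℝ} (hle : ν ≤ μ)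
    (hWc : ContinuousOn W (Icc ν μ)) (hWsym : ∀ x ∈ Icc ν μ, W (ν + μ - x) = W x)
    (hGc : ContinuousOn G (Icc ν μ)) (hG : ∀ x ∈ Ioo ν μ, HasDerivAt G (g x) x)
    (hg : IntervalIntegrable g volume ν μ) :
    (G ν + G μ) / 2 * (∫ x in ν..μ, W x) - ∫ x in ν..μ, W x * G x
      = ∫ x in ν..μ, (∫ t in (ν + μ) / 2..x, W t) * g x := by
  set K : ℝ → ℝ := fun x => ∫ t in (ν + μ) / 2..x, W t
  have hWi : IntervalIntegrable W volume ν μ := hWc.intervalIntegrable_of_Icc hle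
  have hmid : (ν + μ) / 2 ∈ uIcc ν μ := by rw [uIcc_of_le hle]; constructor <;> linarith
  have hKc : ContinuousOn K (uIcc ν μ) :=
    intervalIntegral.continuousOn_primitive_interval' hWi hmid
  have hK : ∀ x ∈ Ioo (min ν μ) (max ν μ), HasDerivAt K (W x) x := by
    rw [min_eq_left hle, max_eq_right hle]
    intro x hx
    have hx' : x ∈ uIcc ν μ := by rw [uIcc_of_le hle]; exact Ioo_subset_Icc_self hx
    exact intervalIntegral.integral_hasDerivAt_right (hWi.mono_set (uIcc_subset_uIcc hmid hx'))
      ((hWc.mono Ioo_subset_Icc_self).stronglyMeasurableAtFilter isOpen_Ioo x hx)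
      (hWc.continuousAt (Icc_mem_nhds hx.1 hx.2))
  have hparts := intervalIntegral.integral_mul_deriv_eq_deriv_mul_of_hasDerivAt hKc
    (by rwa [uIcc_of_le hle]) hK (by rwa [min_eq_left hle, max_eq_right hle]) hWi hg
  have hKν : K ν = -K μ := by
    simp only [K, intervalIntegral.integral_symm ν, integral_mid_right_eq_left_of_symm hle hWsym]
  have hKμν : ∫ x in ν..μ, W x = K μ - K ν :=
    (intervalIntegral.integral_interval_sub_left
      (hWi.mono_set (uIcc_subset_uIcc hmid right_mem_uIcc))
      (hWi.mono_set (uIcc_subset_uIcc hmid left_mem_uIcc))).symm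
  change _ = ∫ x in ν..μ, K x * g x
  rw [hKμν]
  linear_combination (-1 : ℝ) * hparts + (G ν - G μ) / 2 * hKν

lemma integral_mul_le_of_le_rpow_add {s m A C : ℝ} {φ : ℝ → ℝ} (hs : 0 ≤ s)
    (hφ : IntervalIntegrable (fun γ => γ * φ γ) volume 0 1)
    (hle : ∀ γ ∈ Icc (0:ℝ) 1, φ γ ≤ γ ^ s * A + m * (1 - γ) ^ s * C) :
    ∫ γ in (0:ℝ)..1, γ * φ γ
      ≤ 1 / (s + 2) * A + m * (∫ γ in (0:ℝ)..1, γ * (1 - γ) ^ s) * C := by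
  have hpow : Continuous fun γ : ℝ => γ ^ (s + 1) := Real.continuous_rpow_const (by linarith)
  have hbeta : Continuous fun γ : ℝ => γ * (1 - γ) ^ s :=
    continuous_id.mul ((Real.continuous_rpow_const hs).comp (continuous_const.sub continuous_id))
  have hmajor : ∀ γ ∈ Icc (0:ℝ) 1,
      γ * φ γ ≤ γ ^ (s + 1) * A + m * (γ * (1 - γ) ^ s) * C := fun γ hγ => by
    have hsucc : γ ^ (s + 1) = γ * γ ^ s := by
      rw [Real.rpow_add' hγ.1 (by linarith), Real.rpow_one, mul_comm]
    rw [hsucc]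
    nlinarith [mul_le_mul_of_nonneg_left (hle γ hγ) hγ.1]
  have hpow_int : ∫ γ in (0:ℝ)..1, γ ^ (s + 1) = 1 / (s + 2) := by
    rw [integral_rpow (Or.inl (by linarith)), Real.one_rpow,
      Real.zero_rpow (by linarith), show s + 1 + 1 = s + 2 by ring, sub_zero]
  have hint₁ : IntervalIntegrable (fun γ => γ ^ (s + 1) * A) volume 0 1 :=
    (hpow.mul continuous_const).intervalIntegrable 0 1
  have hint₂ : IntervalIntegrable (fun γ => m * (γ * (1 - γ) ^ s) * C) volume 0 1 :=
    ((continuous_const.mul hbeta).mul continuous_const).intervalIntegrable 0 1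
  calc ∫ γ in (0:ℝ)..1, γ * φ γ
      ≤ ∫ γ in (0:ℝ)..1, γ ^ (s + 1) * A + m * (γ * (1 - γ) ^ s) * C :=
        intervalIntegral.integral_mono_on zero_le_one hφ (hint₁.add hint₂) hmajor
    _ = 1 / (s + 2) * A + m * (∫ γ in (0:ℝ)..1, γ * (1 - γ) ^ s) * C := by
        rw [intervalIntegral.integral_add hint₁ hint₂, intervalIntegral.integral_mul_const,
          intervalIntegral.integral_mul_const, intervalIntegral.integral_const_mul, hpow_int]

lemma abs_integral_mul_le_of_le_rpow_add {x₀ e M s m A C : ℝ} {K g : ℝ → ℝ} (hs : 0 ≤ s)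
    (hM : 0 ≤ M) (hKc : ContinuousOn K (uIcc x₀ e)) (hgc : ContinuousOn g (uIcc x₀ e))
    (hK : ∀ x ∈ uIcc x₀ e, |K x| ≤ M * |x - x₀|)
    (hg : ∀ γ ∈ Icc (0:ℝ) 1, |g (x₀ + (e - x₀) * γ)| ≤ γ ^ s * A + m * (1 - γ) ^ s * C) :
    |∫ x in x₀..e, K x * g x|
      ≤ M * (e - x₀) ^ 2 * (1 / (s + 2) * A + m * (∫ γ in (0:ℝ)..1, γ * (1 - γ) ^ s) * C) := by
  set d := e - x₀
  set path : ℝ → ℝ := fun γ => x₀ + d * γ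
  have hpath : MapsTo path (Icc 0 1) (uIcc x₀ e) := fun γ hγ => by
    simpa [path, d, mul_comm] using (convex_uIcc x₀ e).add_smul_sub_mem left_mem_uIcc
      right_mem_uIcc hγ
  have hpc : ContinuousOn path (Icc 0 1) := by fun_prop
  have hKg : ContinuousOn (fun γ => |K (path γ)| * |g (path γ)|) (Icc 0 1) :=
    ((hKc.comp hpc hpath).abs).mul ((hgc.comp hpc hpath).abs)
  have hg' : ContinuousOn (fun γ => γ * |g (path γ)|) (Icc 0 1) :=
    continuousOn_id.mul (hgc.comp hpc hpath).abs
  have hsubst : ∫ x in x₀..e, K x * g x = d * ∫ γ in (0:ℝ)..1, K (path γ) * g (path γ) := by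
    simpa [path, d] using (intervalIntegral.smul_integral_comp_add_mul (a := 0) (b := 1)
      (fun x => K x * g x) d x₀).symm
  have hpointwise : ∀ γ ∈ Icc (0:ℝ) 1, |K (path γ)| * |g (path γ)| ≤ M * |d| * (γ * |g (path γ)|) :=
    fun γ hγ => by
      have := hK _ (hpath hγ)
      simp only [path, add_sub_cancel_left, abs_mul, abs_of_nonneg hγ.1] at this
      nlinarith [abs_nonneg (g (path γ))]
  calc |∫ x in x₀..e, K x * g x|
      = |d| * |∫ γ in (0:ℝ)..1, K (path γ) * g (path γ)| := by rw [hsubst, abs_mul]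
    _ ≤ |d| * ∫ γ in (0:ℝ)..1, |K (path γ)| * |g (path γ)| := by
        gcongr
        refine (intervalIntegral.abs_integral_le_integral_abs zero_le_one).trans_eq ?_
        simp only [abs_mul]
    _ ≤ |d| * ∫ γ in (0:ℝ)..1, M * |d| * (γ * |g (path γ)|) := by
        gcongr
        exact intervalIntegral.integral_mono_on zero_le_one
          (hKg.intervalIntegrable_of_Icc zero_le_one)
          ((hg'.intervalIntegrable_of_Icc zero_le_one).const_mul _) hpointwise
    _ = M * d ^ 2 * ∫ γ in (0:ℝ)..1, γ * |g (path γ)| := by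
        rw [intervalIntegral.integral_const_mul, ← sq_abs d]; ring
    _ ≤ M * d ^ 2 * (1 / (s + 2) * A + m * (∫ γ in (0:ℝ)..1, γ * (1 - γ) ^ s) * C) := by
        gcongr
        exact integral_mul_le_of_le_rpow_add hs (hg'.intervalIntegrable_of_Icc zero_le_one) hg

lemma abs_integral_mul_le_of_le_rpow_add_of_mem_Icc {ν μ c M s m A B C : ℝ} {K g : ℝ → ℝ}
    (hs : 0 ≤ s) (hM : 0 ≤ M) (hc : c ∈ Icc ν μ) (hKc : ContinuousOn K (Icc ν μ))
    (hgc : ContinuousOn g (Icc ν μ)) (hK : ∀ x ∈ Icc ν μ, |K x| ≤ M * |x - c|)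
    (hgν : ∀ γ ∈ Icc (0:ℝ) 1, |g (c + (ν - c) * γ)| ≤ γ ^ s * A + m * (1 - γ) ^ s * C)
    (hgμ : ∀ γ ∈ Icc (0:ℝ) 1, |g (c + (μ - c) * γ)| ≤ γ ^ s * B + m * (1 - γ) ^ s * C) :
    |∫ x in ν..μ, K x * g x|
      ≤ M * (μ - c) ^ 2 * (1 / (s + 2) * B + m * (∫ γ in (0:ℝ)..1, γ * (1 - γ) ^ s) * C)
        + M * (ν - c) ^ 2 * (1 / (s + 2) * A + m * (∫ γ in (0:ℝ)..1, γ * (1 - γ) ^ s) * C) := by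
  have hsub : ∀ e ∈ Icc ν μ, uIcc c e ⊆ Icc ν μ := fun e he => uIcc_subset_Icc hc he
  have hint : ∀ e ∈ Icc ν μ, IntervalIntegrable (fun x => K x * g x) volume c e := fun e he =>
    ((hKc.mul hgc).mono (hsub e he)).intervalIntegrable
  have hhalf : ∀ e ∈ Icc ν μ, ∀ D,
      (∀ γ ∈ Icc (0:ℝ) 1, |g (c + (e - c) * γ)| ≤ γ ^ s * D + m * (1 - γ) ^ s * C) →
      |∫ x in c..e, K x * g x|
        ≤ M * (e - c) ^ 2 * (1 / (s + 2) * D + m * (∫ γ in (0:ℝ)..1, γ * (1 - γ) ^ s) * C) :=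
    fun e he _ => abs_integral_mul_le_of_le_rpow_add hs hM (hKc.mono (hsub e he))
      (hgc.mono (hsub e he)) fun x hx => hK x (hsub e he hx)
  obtain ⟨hν, hμ⟩ : ν ∈ Icc ν μ ∧ μ ∈ Icc ν μ :=
    ⟨⟨le_rfl, hc.1.trans hc.2⟩, ⟨hc.1.trans hc.2, le_rfl⟩⟩
  rw [← intervalIntegral.integral_interval_sub_left (hint μ hμ) (hint ν hν)]
  exact (abs_sub _ _).trans (add_le_add (hhalf μ hμ B hgμ) (hhalf ν hν A hgν))

lemma abs_integral_le_sSup_image_mul_abs_sub {ν μ c x : ℝ} {W : ℝ → ℝ}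
    (hW : ∀ x ∈ Icc ν μ, 0 ≤ W x) (hWc : ContinuousOn W (Icc ν μ)) (hc : c ∈ Icc ν μ)
    (hx : x ∈ Icc ν μ) :
    |∫ t in c..x, W t| ≤ sSup (W '' Icc ν μ) * |x - c| := by
  simpa only [Real.norm_eq_abs] using intervalIntegral.norm_integral_le_of_norm_le_const (f := W)
    fun t ht => by
      have ht' : t ∈ Icc ν μ := uIcc_subset_Icc hc hx (uIoc_subset_uIcc ht)
      rw [Real.norm_eq_abs, abs_of_nonneg (hW t ht')]
      exact le_csSup (isCompact_Icc.image_of_continuousOn hWc).bddAbove ⟨t, ht', rfl⟩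

theorem fejer_bound_sm_convex
    (ν μ m s a b : ℝ) (hνμ : ν < μ) (hm : m ∈ Set.Ioc (0:ℝ) 1) (hs : s ∈ Set.Ioc (0:ℝ) 1)
    (hab : Set.Icc ν μ ⊆ Set.Ioo a b) (hmid : (ν + μ) / (2 * m) ∈ Set.Ioo a b)
    (G W : ℝ → ℝ)
    (hG : ContDiffOn ℝ 1 G (Set.Ioo a b))
    (hG' : ∀ x ∈ Set.Ioo a b, ∀ y ∈ Set.Ioo a b, ∀ γ ∈ Set.Icc (0:ℝ) 1,
      |deriv G (γ * x + m * (1 - γ) * y)|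
        ≤ γ ^ s * |deriv G x| + m * (1 - γ) ^ s * |deriv G y|)
    (hWnonneg : ∀ x ∈ Set.Icc ν μ, 0 ≤ W x)
    (hWcont : ContinuousOn W (Set.Icc ν μ))
    (hWsym : ∀ x ∈ Set.Icc ν μ, W (ν + μ - x) = W x) :
    |(G ν + G μ) / 2 * (∫ x in ν..μ, W x) - ∫ x in ν..μ, W x * G x|
      ≤ (μ - ν) ^ 2 / 4 * sSup (W '' Set.Icc ν μ) *
        ((1 / (s + 2)) * (|deriv G ν| + |deriv G μ|)
          + 2 * m * (∫ γ in (0:ℝ)..1, γ * (1 - γ) ^ s)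
              * |deriv G ((ν + μ) / (2 * m))|) := by
  have hc : (ν + μ) / 2 ∈ Icc ν μ := ⟨by linarith, by linarith⟩
  have hg : ContinuousOn (deriv G) (Icc ν μ) :=
    (hG.continuousOn_deriv_of_isOpen isOpen_Ioo le_rfl).mono hab
  have hGd : ∀ x ∈ Ioo ν μ, HasDerivAt G (deriv G x) x := fun x hx =>
    ((hG.differentiableOn one_ne_zero).differentiableAt
      (isOpen_Ioo.mem_nhds (hab (Ioo_subset_Icc_self hx)))).hasDerivAt
  have hKc : ContinuousOn (fun x => ∫ t in (ν + μ) / 2..x, W t) (Icc ν μ) := by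
    simpa only [uIcc_of_le hνμ.le] using intervalIntegral.continuousOn_primitive_interval'
      (hWcont.intervalIntegrable_of_Icc hνμ.le) (by rwa [uIcc_of_le hνμ.le])
  -- `(ν + μ) / 2 = m * ((ν + μ) / (2 * m))` turns each half into an instance of `hG'`.
  have hconv : ∀ e ∈ Icc ν μ, ∀ γ ∈ Icc (0:ℝ) 1,
      |deriv G ((ν + μ) / 2 + (e - (ν + μ) / 2) * γ)|
        ≤ γ ^ s * |deriv G e| + m * (1 - γ) ^ s * |deriv G ((ν + μ) / (2 * m))| :=
    fun e he γ hγ => by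
      convert hG' e (hab he) _ hmid γ hγ using 3
      field_simp [hm.1.ne']
      ring
  rw [half_sum_mul_integral_sub_integral_mul_eq hνμ.le hWcont hWsym (hG.continuousOn.mono hab) hGd
    (hg.intervalIntegrable_of_Icc hνμ.le)]
  refine (abs_integral_mul_le_of_le_rpow_add_of_mem_Icc hs.1.le
    (Real.sSup_nonneg (by rintro _ ⟨x, hx, rfl⟩; exact hWnonneg x hx)) hc hKc hg
    (fun x hx => abs_integral_le_sSup_image_mul_abs_sub hWnonneg hWcont hc hx)
    (hconv ν ⟨le_rfl, hνμ.le⟩) (hconv μ ⟨hνμ.le, le_rfl⟩)).trans_eq ?_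
  ring
end

section
/- Let m ∈ (0,1] and h(γ) = 1 for all γ. If G : [0,∞) → ℝ is nonnegative and satisfies G(γx + m(1-γ)y) ≤ G(x) + m·G(y) for all x, y ≥ 0 and γ ∈ [0,1], and 0 ≤ ν < μ with G integrable, then (1/(m+1)) · [(1/(mμ - ν)) ∫_ν^{mμ} G(x) dx + (1/(μ - mν)) ∫_{mν}^μ G(x) dx] ≤ G(ν) + G(μ). -/
/-! Every point of the segment between `x` and `m * y` has the form `γ * x + m * (1 - γ) * y`,
so `G` is bounded by `G x + m * G y` there, and hence so is its mean value. Applied to the segments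
`[ν, m μ]` and `[m ν, μ]`, the two mean values add up to at most `(m + 1) * (G ν + G μ)`. -/

open Set

theorem intervalIntegral.one_div_sub_mul_integral_le {f : ℝ → ℝ} {a b C : ℝ}
    (hf₀ : ∀ x ∈ uIcc a b, 0 ≤ f x) (hfC : ∀ x ∈ uIcc a b, f x ≤ C) :
    (1 / (b - a)) * ∫ x in a..b, f x ≤ C := by
  have hC : 0 ≤ C := (hf₀ a left_mem_uIcc).trans (hfC a left_mem_uIcc)
  have hnorm : ‖∫ x in a..b, f x‖ ≤ C * |b - a| :=
    intervalIntegral.norm_integral_le_of_norm_le_const fun x hx => by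
      rw [Real.norm_of_nonneg (hf₀ x (uIoc_subset_uIcc hx))]
      exact hfC x (uIoc_subset_uIcc hx)
  calc (1 / (b - a)) * ∫ x in a..b, f x
      ≤ |1 / (b - a)| * ‖∫ x in a..b, f x‖ := by
        rw [Real.norm_eq_abs, ← abs_mul]; exact le_abs_self _
    _ ≤ |1 / (b - a)| * (C * |b - a|) := by gcongr
    _ = C * (|b - a|⁻¹ * |b - a|) := by rw [abs_div, abs_one]; ring
    _ ≤ C := mul_le_of_le_one_right hC inv_mul_le_one

section

variable {G : ℝ → ℝ} {m : ℝ}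
  (hG : ∀ x : ℝ, 0 ≤ x → ∀ y : ℝ, 0 ≤ y → ∀ γ ∈ Icc (0:ℝ) 1,
    G (γ * x + m * (1 - γ) * y) ≤ G x + m * G y)
include hG

theorem le_add_mul_of_mem_uIcc {x y t : ℝ} (hx : 0 ≤ x) (hy : 0 ≤ y)
    (ht : t ∈ uIcc x (m * y)) : G t ≤ G x + m * G y := by
  rw [← segment_eq_uIcc] at ht
  obtain ⟨γ, δ, hγ, hδ, hγδ, rfl⟩ := ht
  convert hG x hx y hy γ ⟨hγ, by linarith⟩ using 2
  rw [smul_eq_mul, smul_eq_mul, ← eq_sub_of_add_eq' hγδ]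
  ring

end

theorem p_function_HH_general
    (ν μ m : ℝ) (hν : 0 ≤ ν) (hνμ : ν < μ) (hm : m ∈ Set.Ioc (0:ℝ) 1)
    (G : ℝ → ℝ)
    (hGnonneg : ∀ x : ℝ, 0 ≤ x → 0 ≤ G x)
    (hG : ∀ x : ℝ, 0 ≤ x → ∀ y : ℝ, 0 ≤ y → ∀ γ ∈ Set.Icc (0:ℝ) 1,
      G (γ * x + m * (1 - γ) * y) ≤ G x + m * G y) :
    (1 / (m + 1)) * ((1 / (m * μ - ν)) * (∫ x in ν..(m * μ), G x)
        + (1 / (μ - m * ν)) * ∫ x in (m * ν)..μ, G x)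
      ≤ G ν + G μ := by
  have hμ : 0 ≤ μ := hν.trans hνμ.le
  have hmν : 0 ≤ m * ν := mul_nonneg hm.1.le hν
  have hmμ : 0 ≤ m * μ := mul_nonneg hm.1.le hμ
  have hG₀ : ∀ a b : ℝ, 0 ≤ a → 0 ≤ b → ∀ t ∈ uIcc a b, 0 ≤ G t := fun a b ha hb t ht =>
    hGnonneg t ((le_min ha hb).trans ht.1)
  have h₁ : (1 / (m * μ - ν)) * (∫ x in ν..(m * μ), G x) ≤ G ν + m * G μ :=
    intervalIntegral.one_div_sub_mul_integral_le (hG₀ _ _ hν hmμ)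
      fun t ht => le_add_mul_of_mem_uIcc hG hν hμ ht
  have h₂ : (1 / (μ - m * ν)) * (∫ x in (m * ν)..μ, G x) ≤ G μ + m * G ν :=
    intervalIntegral.one_div_sub_mul_integral_le (hG₀ _ _ hmν hμ)
      fun t ht => le_add_mul_of_mem_uIcc hG hμ hν (uIcc_comm (m * ν) μ ▸ ht)
  rw [one_div_mul_eq_div, div_le_iff₀ (by linarith [hm.1])]
  linarith

theorem p_function_HH
    (ν μ m : ℝ) (hν : 0 ≤ ν) (hνμ : ν < μ) (hm : m ∈ Set.Ioc (0:ℝ) 1)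
    (G : ℝ → ℝ)
    (hGnonneg : ∀ x : ℝ, 0 ≤ x → 0 ≤ G x)
    (hG : ∀ x : ℝ, 0 ≤ x → ∀ y : ℝ, 0 ≤ y → ∀ γ ∈ Set.Icc (0:ℝ) 1,
      G (γ * x + m * (1 - γ) * y) ≤ G x + m * G y)
    (hGint1 : IntervalIntegrable G MeasureTheory.volume ν (m * μ))
    (hGint2 : IntervalIntegrable G MeasureTheory.volume (m * ν) μ) :
    (1 / (m + 1)) * ((1 / (m * μ - ν)) * (∫ x in ν..(m * μ), G x)
        + (1 / (μ - m * ν)) * ∫ x in (m * ν)..μ, G x)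
      ≤ G ν + G μ :=
  p_function_HH_general ν μ m hν hνμ hm G hGnonneg hG
end

section
/- Let s ∈ (0,1] and let G : [0,∞) → ℝ be s-convex in the second sense, i.e., G(γx + (1-γ)y) ≤ γ^s G(x) + (1-γ)^s G(y) for x, y ≥ 0, γ ∈ [0,1]. Then for 0 ≤ ν < μ with G integrable on [ν, μ], (1/(μ-ν)) ∫_ν^μ G(x) dx ≤ (G(ν) + G(μ))/(s+1). -/
/-!
The substitution `x = t * b + (1 - t) * a` turns the mean value of `G` over `[a, b]` into
`∫ t in 0..1, G (t * b + (1 - t) * a)`. Bounding the integrand by s-convexity leaves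
`∫ t in 0..1, t ^ s = ∫ t in 0..1, (1 - t) ^ s = 1 / (s + 1)`.
-/

open MeasureTheory intervalIntegral Set

/-- s-convexity in the second sense (Breckner). -/
def SConvexOn (s : ℝ) (D : Set ℝ) (G : ℝ → ℝ) : Prop :=
  ∀ x ∈ D, ∀ y ∈ D, ∀ γ ∈ Icc (0 : ℝ) 1,
    G (γ * x + (1 - γ) * y) ≤ γ ^ s * G x + (1 - γ) ^ s * G y

section RpowOnUnitInterval

variable {s : ℝ}

theorem integral_rpow_zero_one (hs : -1 < s) : ∫ t in (0 : ℝ)..1, t ^ s = 1 / (s + 1) := by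
  rw [integral_rpow (Or.inl hs), Real.zero_rpow (by linarith), Real.one_rpow, sub_zero]

theorem integral_one_sub_rpow_zero_one (hs : -1 < s) :
    ∫ t in (0 : ℝ)..1, (1 - t) ^ s = 1 / (s + 1) := by
  rw [integral_comp_sub_left (fun t : ℝ => t ^ s) 1, sub_self, sub_zero]
  exact integral_rpow_zero_one hs

theorem intervalIntegrable_one_sub_rpow_zero_one (hs : -1 < s) :
    IntervalIntegrable (fun t : ℝ => (1 - t) ^ s) volume 0 1 := by
  simpa using ((intervalIntegrable_rpow' (a := 0) (b := 1) hs).comp_sub_left 1).symm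

theorem integral_rpow_mul_add_one_sub_rpow_mul (hs : -1 < s) (p q : ℝ) :
    ∫ t in (0 : ℝ)..1, (t ^ s * p + (1 - t) ^ s * q) = (p + q) / (s + 1) := by
  rw [integral_add ((intervalIntegrable_rpow' hs).mul_const p)
      ((intervalIntegrable_one_sub_rpow_zero_one hs).mul_const q),
    intervalIntegral.integral_mul_const, intervalIntegral.integral_mul_const,
    integral_rpow_zero_one hs, integral_one_sub_rpow_zero_one hs]
  ring

end RpowOnUnitInterval

theorem inv_sub_mul_integral_eq_integral_unitInterval {a b : ℝ} (hab : a ≠ b) (G : ℝ → ℝ) :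
    (b - a)⁻¹ * ∫ x in a..b, G x = ∫ t in (0 : ℝ)..1, G (t * b + (1 - t) * a) := by
  have hba : b - a ≠ 0 := sub_ne_zero.2 hab.symm
  have key := integral_comp_mul_add (a := 0) (b := 1) G hba a
  simp only [mul_zero, zero_add, mul_one, sub_add_cancel, smul_eq_mul] at key
  rw [← key]
  congr 1 with t
  ring_nf

theorem SConvexOn.inv_sub_mul_integral_le {s : ℝ} {D : Set ℝ} {G : ℝ → ℝ} (hG : SConvexOn s D G)
    (hs : -1 < s) {a b : ℝ} (ha : a ∈ D) (hb : b ∈ D) (hab : a ≠ b)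
    (hint : IntervalIntegrable G volume a b) :
    (b - a)⁻¹ * ∫ x in a..b, G x ≤ (G a + G b) / (s + 1) := by
  have hint_comp : IntervalIntegrable (fun t => G (t * b + (1 - t) * a)) volume 0 1 := by
    have hba : b - a ≠ 0 := sub_ne_zero.2 hab.symm
    convert (hint.comp_add_right a).comp_mul_left (c := b - a) using 1
    · ext t; congr 1; ring
    · simp
    · exact (div_self hba).symm
  have hint_bound : IntervalIntegrable (fun t : ℝ => t ^ s * G b + (1 - t) ^ s * G a) volume 0 1 :=
    ((intervalIntegrable_rpow' hs).mul_const _).add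
      ((intervalIntegrable_one_sub_rpow_zero_one hs).mul_const _)
  rw [inv_sub_mul_integral_eq_integral_unitInterval hab, add_comm,
    ← integral_rpow_mul_add_one_sub_rpow_mul hs]
  exact integral_mono_on zero_le_one hint_comp hint_bound fun t ht => hG b hb a ha t ht

theorem s_convex_HH_right
    (ν μ s : ℝ) (hν : 0 ≤ ν) (hνμ : ν < μ) (hs : s ∈ Set.Ioc (0:ℝ) 1)
    (G : ℝ → ℝ)
    (hG : ∀ x : ℝ, 0 ≤ x → ∀ y : ℝ, 0 ≤ y → ∀ γ ∈ Set.Icc (0:ℝ) 1,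
      G (γ * x + (1 - γ) * y) ≤ γ ^ s * G x + (1 - γ) ^ s * G y)
    (hGint : IntervalIntegrable G MeasureTheory.volume ν μ) :
    (1 / (μ - ν)) * (∫ x in ν..μ, G x) ≤ (G ν + G μ) / (s + 1) := by
  have hsconvex : SConvexOn s (Ici 0) G := fun x hx y hy => hG x hx y hy
  rw [one_div]
  exact hsconvex.inv_sub_mul_integral_le (by linarith [hs.1]) hν (hν.trans hνμ.le) hνμ.ne hGint
end

section
/- Let h be a nonnegative integrable function on [0,1] with h(1/2) ≠ 0, and let G : [ν, μ] → ℝ be nonnegative, integrable, and h-convex (G(γx + (1-γ)y) ≤ h(γ)G(x) + h(1-γ)G(y)). Then (1/(2h(1/2))) · G((ν+μ)/2) ≤ (1/(μ-ν)) ∫_ν^μ G(x) dx ≤ (G(ν) + G(μ)) · ∫_0^1 h(γ) dγ. -/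
/-!
Substituting `x = γ μ + (1 - γ) ν` turns the mean value of `G` over `[ν, μ]` into
`∫₀¹ G(γ μ + (1 - γ) ν) dγ`. For the right inequality, integrate the h-convexity bound
`G(γ μ + (1 - γ) ν) ≤ h(γ) G(μ) + h(1 - γ) G(ν)` over `γ ∈ [0, 1]`, using
`∫₀¹ h(1 - γ) dγ = ∫₀¹ h(γ) dγ`. For the left one, the midpoint `(ν + μ)/2` is the average of
the two points with parameters `γ` and `1 - γ`, so `G((ν + μ)/2)` is at most `h(1/2)` times the
sum of the values there; both of these integrate to the mean value.
-/

open MeasureTheory Set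

def HConvexOn (h : ℝ → ℝ) (s : Set ℝ) (G : ℝ → ℝ) : Prop :=
  ∀ x ∈ s, ∀ y ∈ s, ∀ γ ∈ Icc (0 : ℝ) 1, G (γ * x + (1 - γ) * y) ≤ h γ * G x + h (1 - γ) * G y

theorem integral_unitInterval_comp_one_sub (f : ℝ → ℝ) :
    ∫ t in (0 : ℝ)..1, f (1 - t) = ∫ t in (0 : ℝ)..1, f t := by
  simp [intervalIntegral.integral_comp_sub_left]

theorem IntervalIntegrable.unitInterval_comp_one_sub {f : ℝ → ℝ}
    (hf : IntervalIntegrable f volume 0 1) :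
    IntervalIntegrable (fun t ↦ f (1 - t)) volume 0 1 := by
  simpa using (hf.comp_sub_left 1).symm

section Segment

variable {a b : ℝ}

theorem mul_add_one_sub_mul_mem_Icc (hab : a ≤ b) {t : ℝ} (ht : t ∈ Icc (0 : ℝ) 1) :
    t * b + (1 - t) * a ∈ Icc a b := by
  simpa [add_comm] using convex_Icc a b (left_mem_Icc.2 hab) (right_mem_Icc.2 hab)
    (sub_nonneg.2 ht.2) ht.1 (sub_add_cancel 1 t)

theorem integral_unitInterval_comp_segment (G : ℝ → ℝ) (hab : a ≠ b) :
    ∫ t in (0 : ℝ)..1, G (t * b + (1 - t) * a) = (b - a)⁻¹ * ∫ x in a..b, G x := by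
  have hba : b - a ≠ 0 := sub_ne_zero.2 hab.symm
  have key := intervalIntegral.integral_comp_mul_add (a := 0) (b := 1) G hba a
  simp only [mul_zero, zero_add, mul_one, sub_add_cancel, smul_eq_mul] at key
  rw [← key]
  congr 1 with t
  ring_nf

theorem IntervalIntegrable.unitInterval_comp_segment {G : ℝ → ℝ}
    (hG : IntervalIntegrable G volume a b) (hab : a ≠ b) :
    IntervalIntegrable (fun t ↦ G (t * b + (1 - t) * a)) volume 0 1 := by
  have hba : b - a ≠ 0 := sub_ne_zero.2 hab.symm
  have key := (hG.comp_add_right a).comp_mul_left (c := b - a)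
  rw [sub_self, zero_div, div_self hba] at key
  convert key using 2 with t
  ring_nf

end Segment

namespace HConvexOn

variable {h G : ℝ → ℝ} {a b : ℝ}

theorem apply_midpoint_le (hG : HConvexOn h (Icc a b) G) (hab : a ≤ b) {t : ℝ}
    (ht : t ∈ Icc (0 : ℝ) 1) :
    G ((a + b) / 2) ≤
      h (1 / 2) * (G (t * b + (1 - t) * a) + G ((1 - t) * b + (1 - (1 - t)) * a)) := by
  have hx := mul_add_one_sub_mul_mem_Icc hab ht
  have hy := mul_add_one_sub_mul_mem_Icc hab ⟨sub_nonneg.2 ht.2, sub_le_self 1 ht.1⟩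
  have := hG _ hx _ hy (1 / 2) ⟨by norm_num, by norm_num⟩
  convert this using 2 <;> ring_nf

theorem apply_midpoint_le_mul_average (hG : HConvexOn h (Icc a b) G) (hab : a < b)
    (hGint : IntervalIntegrable G volume a b) :
    G ((a + b) / 2) ≤ 2 * h (1 / 2) * ((b - a)⁻¹ * ∫ x in a..b, G x) := by
  have hF := hGint.unitInterval_comp_segment hab.ne
  have hFrefl := hF.unitInterval_comp_one_sub
  have hmono := intervalIntegral.integral_mono_on zero_le_one intervalIntegrable_const
    ((hF.add hFrefl).const_mul (h (1 / 2))) (fun t ht ↦ hG.apply_midpoint_le hab.le ht)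
  rw [intervalIntegral.integral_const, intervalIntegral.integral_const_mul,
    intervalIntegral.integral_add hF hFrefl,
    integral_unitInterval_comp_one_sub (fun t ↦ G (t * b + (1 - t) * a)),
    integral_unitInterval_comp_segment G hab.ne, sub_zero, one_smul] at hmono
  linarith

theorem average_le_mul_integral (hG : HConvexOn h (Icc a b) G) (hab : a < b)
    (hGint : IntervalIntegrable G volume a b) (hhint : IntervalIntegrable h volume 0 1) :
    (b - a)⁻¹ * ∫ x in a..b, G x ≤ (G a + G b) * ∫ t in (0 : ℝ)..1, h t := by
  have hhrefl := hhint.unitInterval_comp_one_sub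
  have hmono := intervalIntegral.integral_mono_on zero_le_one
    (hGint.unitInterval_comp_segment hab.ne) ((hhint.mul_const (G b)).add (hhrefl.mul_const (G a)))
    (fun t ht ↦ hG b (right_mem_Icc.2 hab.le) a (left_mem_Icc.2 hab.le) t ht)
  rw [integral_unitInterval_comp_segment G hab.ne,
    intervalIntegral.integral_add (hhint.mul_const _) (hhrefl.mul_const _),
    intervalIntegral.integral_mul_const, intervalIntegral.integral_mul_const,
    integral_unitInterval_comp_one_sub h] at hmono
  linarith

end HConvexOn

theorem h_convex_HH_general
    (ν μ : ℝ) (hνμ : ν < μ)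
    (h : ℝ → ℝ) (hh : ∀ γ ∈ Set.Icc (0:ℝ) 1, 0 ≤ h γ)
    (hhint : IntervalIntegrable h MeasureTheory.volume 0 1)
    (hhalf : h (1/2) ≠ 0)
    (G : ℝ → ℝ)
    (hGint : IntervalIntegrable G MeasureTheory.volume ν μ)
    (hG : ∀ x ∈ Set.Icc ν μ, ∀ y ∈ Set.Icc ν μ, ∀ γ ∈ Set.Icc (0:ℝ) 1,
      G (γ * x + (1 - γ) * y) ≤ h γ * G x + h (1 - γ) * G y) :
    (1 / (2 * h (1/2))) * G ((ν + μ) / 2) ≤ (1 / (μ - ν)) * ∫ x in ν..μ, G x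
      ∧ (1 / (μ - ν)) * (∫ x in ν..μ, G x) ≤ (G ν + G μ) * ∫ γ in (0:ℝ)..1, h γ := by
  have hG' : HConvexOn h (Icc ν μ) G := hG
  have hhalf_pos : 0 < 2 * h (1 / 2) :=
    mul_pos two_pos ((hh (1 / 2) ⟨by norm_num, by norm_num⟩).lt_of_ne hhalf.symm)
  rw [one_div (μ - ν)]
  refine ⟨?_, hG'.average_le_mul_integral hνμ hGint hhint⟩
  rw [one_div_mul_eq_div, div_le_iff₀' hhalf_pos]
  exact hG'.apply_midpoint_le_mul_average hνμ hGint

theorem h_convex_HH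
    (ν μ : ℝ) (hνμ : ν < μ)
    (h : ℝ → ℝ) (hh : ∀ γ ∈ Set.Icc (0:ℝ) 1, 0 ≤ h γ)
    (hhint : IntervalIntegrable h MeasureTheory.volume 0 1)
    (hhalf : h (1/2) ≠ 0)
    (G : ℝ → ℝ)
    (hGnonneg : ∀ x ∈ Set.Icc ν μ, 0 ≤ G x)
    (hGint : IntervalIntegrable G MeasureTheory.volume ν μ)
    (hG : ∀ x ∈ Set.Icc ν μ, ∀ y ∈ Set.Icc ν μ, ∀ γ ∈ Set.Icc (0:ℝ) 1,
      G (γ * x + (1 - γ) * y) ≤ h γ * G x + h (1 - γ) * G y) :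
    (1 / (2 * h (1/2))) * G ((ν + μ) / 2) ≤ (1 / (μ - ν)) * ∫ x in ν..μ, G x
      ∧ (1 / (μ - ν)) * (∫ x in ν..μ, G x) ≤ (G ν + G μ) * ∫ γ in (0:ℝ)..1, h γ :=
  h_convex_HH_general ν μ hνμ h hh hhint hhalf G hGint hG
end
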